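/- arXiv:2006.07727 — 10 statements merged into one kernel-verified Lean document; each statement's English description precedes it below -/
import Mathlib

section
/- Let n1, n2 ≥ 2 and let D ∈ ℝ^{(n1−1)×n1} and D̃ ∈ ℝ^{(n2−1)×n2} be the forward difference operators. A matrix A ∈ ℝ^{n1×n2} satisfies D A D̃ᵀ = 0 if and only if there exist vectors u ∈ ℝ^{n1} and v ∈ ℝ^{n2} such that A_{ij} = u_i + v_j for all i ∈ [n1], j ∈ [n2]. Equivalently, the kernel of the linear map A ↦ D A D̃ᵀ is the set of matrices of the form u 1ᵀ + 1 vᵀ, and hence the orthogonal complement (with respect to the Frobenius inner product) of this kernel equals the image of the map A ↦ Dᵀ A D̃. -/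
open Matrix

/-- The forward difference operator `D ∈ ℝ^{n×(n+1)}`, with `D_{i,i} = -1`, `D_{i,i+1} = 1`
and zeros elsewhere. -/
noncomputable def diffMat (n : ℕ) : Matrix (Fin n) (Fin (n + 1)) ℝ :=
  Matrix.of fun i j => if (j : ℕ) = (i : ℕ) then -1 else if (j : ℕ) = (i : ℕ) + 1 then 1 else 0

private lemma Ssum {n : ℕ} (f : Fin n → ℝ) (t : ℕ) :
    (∑ p : Fin n, if (p : ℕ) = t then f p else 0) = if h : t < n then f ⟨t, h⟩ else 0 := by
  by_cases h : t < n
  · rw [dif_pos h, Finset.sum_eq_single (⟨t, h⟩ : Fin n)]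
    · simp
    · intro b _ hb
      exact if_neg fun hbt => hb (Fin.ext hbt)
    · simp
  · rw [dif_neg h]
    exact Finset.sum_eq_zero fun p _ => if_neg fun hp => h (by omega)

private lemma diff_mul_apply {m n : ℕ} (A : Matrix (Fin (m+1)) (Fin n) ℝ) (i : Fin m) (q : Fin n) :
    (diffMat m * A) i q = A i.succ q - A i.castSucc q := by
  rw [Matrix.mul_apply]
  have h1 : ∀ p : Fin (m+1), diffMat m i p * A p q
      = (if (p:ℕ) = (i:ℕ)+1 then A p q else 0) - (if (p:ℕ) = (i:ℕ) then A p q else 0) := by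
    intro p
    simp only [diffMat, Matrix.of_apply]
    split_ifs <;> first | (exfalso; omega) | ring
  simp only [h1, Finset.sum_sub_distrib, Ssum]
  rw [dif_pos (Nat.succ_lt_succ i.isLt), dif_pos (i.isLt.trans (Nat.lt_succ_self m))]
  rfl

private lemma mul_diffT_apply {n k : ℕ} (A : Matrix (Fin n) (Fin (k+1)) ℝ) (i : Fin n) (q : Fin k) :
    (A * (diffMat k)ᵀ) i q = A i q.succ - A i q.castSucc := by
  rw [Matrix.mul_apply]
  have h1 : ∀ p : Fin (k+1), A i p * (diffMat k)ᵀ p q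
      = (if (p:ℕ) = (q:ℕ)+1 then A i p else 0) - (if (p:ℕ) = (q:ℕ) then A i p else 0) := by
    intro p
    simp only [diffMat, Matrix.of_apply, Matrix.transpose_apply]
    split_ifs <;> first | (exfalso; omega) | ring
  simp only [h1, Finset.sum_sub_distrib, Ssum]
  rw [dif_pos (Nat.succ_lt_succ q.isLt), dif_pos (q.isLt.trans (Nat.lt_succ_self k))]
  rfl

private lemma part1 {m k : ℕ} (A : Matrix (Fin (m+1)) (Fin (k+1)) ℝ) :
    diffMat m * A * (diffMat k)ᵀ = 0 ↔
      ∃ (u : Fin (m + 1) → ℝ) (v : Fin (k + 1) → ℝ), ∀ i j, A i j = u i + v j := by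
  constructor
  · intro h
    have key : ∀ (p : Fin m) (q : Fin k),
        A p.succ q.succ - A p.castSucc q.succ - A p.succ q.castSucc
          + A p.castSucc q.castSucc = 0 := by
      intro p q
      have h1 := congrFun (congrFun h p) q
      rw [mul_diffT_apply, diff_mul_apply, diff_mul_apply, Matrix.zero_apply] at h1
      linarith
    have main : ∀ i, ∀ j, A i j = A i 0 + A 0 j - A 0 0 := by
      intro i
      induction i using Fin.induction with
      | zero => intro j; ring
      | succ p ih =>
        intro j
        induction j using Fin.induction with
        | zero => ring
        | succ q ihq => linarith [key p q, ih q.succ, ih q.castSucc, ihq]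
    exact ⟨fun i => A i 0 - A 0 0, fun j => A 0 j, fun i j => by rw [main i j]; ring⟩
  · rintro ⟨u, v, huv⟩
    ext p q
    rw [mul_diffT_apply, diff_mul_apply, diff_mul_apply, Matrix.zero_apply,
      huv, huv, huv, huv]
    ring

private lemma inner_eq_trace {I J : Type*} [Fintype I] [Fintype J] (B A : Matrix I J ℝ) :
    ∑ i, ∑ j, B i j * A i j = Matrix.trace (Bᵀ * A) := by
  rw [Finset.sum_comm]
  simp [Matrix.trace, Matrix.mul_apply, Matrix.diag]

private noncomputable def pSum {m k : ℕ} (B : Matrix (Fin (m+1)) (Fin (k+1)) ℝ) (a b : ℕ) : ℝ :=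
  ∑ i : Fin (m+1), ∑ j : Fin (k+1), if (i:ℕ) < a ∧ (j:ℕ) < b then B i j else 0

private lemma pSum_zero_left {m k : ℕ} (B : Matrix (Fin (m+1)) (Fin (k+1)) ℝ) (b : ℕ) :
    pSum B 0 b = 0 := by simp [pSum]

private lemma pSum_zero_right {m k : ℕ} (B : Matrix (Fin (m+1)) (Fin (k+1)) ℝ) (a : ℕ) :
    pSum B a 0 = 0 := by simp [pSum]

private lemma pSum_top {m k : ℕ} (B : Matrix (Fin (m+1)) (Fin (k+1)) ℝ)
    (hcol : ∀ j₀, ∑ i, B i j₀ = 0) (b : ℕ) : pSum B (m+1) b = 0 := by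
  simp only [pSum]
  rw [Finset.sum_comm]
  refine Finset.sum_eq_zero fun j _ => ?_
  by_cases hj : (j:ℕ) < b
  · calc (∑ i : Fin (m+1), if (i:ℕ) < m+1 ∧ (j:ℕ) < b then B i j else 0) = ∑ i, B i j :=
          Finset.sum_congr rfl fun i _ => if_pos ⟨i.isLt, hj⟩
      _ = 0 := hcol j
  · exact Finset.sum_eq_zero fun i _ => if_neg (by tauto)

private lemma pSum_right {m k : ℕ} (B : Matrix (Fin (m+1)) (Fin (k+1)) ℝ)
    (hrow : ∀ i₀, ∑ j, B i₀ j = 0) (a : ℕ) : pSum B a (k+1) = 0 := by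
  simp only [pSum]
  refine Finset.sum_eq_zero fun i _ => ?_
  by_cases hi : (i:ℕ) < a
  · calc (∑ j : Fin (k+1), if (i:ℕ) < a ∧ (j:ℕ) < k+1 then B i j else 0) = ∑ j, B i j :=
          Finset.sum_congr rfl fun j _ => if_pos ⟨hi, j.isLt⟩
      _ = 0 := hrow i
  · exact Finset.sum_eq_zero fun j _ => if_neg (by tauto)

private lemma pSum_succ_left {m k : ℕ} (B : Matrix (Fin (m+1)) (Fin (k+1)) ℝ)
    (a b : ℕ) (ha : a < m+1) :
    pSum B (a+1) b - pSum B a b = ∑ j : Fin (k+1), if (j:ℕ) < b then B ⟨a, ha⟩ j else 0 := by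
  simp only [pSum, ← Finset.sum_sub_distrib]
  have h1 : ∀ (i : Fin (m+1)) (j : Fin (k+1)),
      (if (i:ℕ) < a+1 ∧ (j:ℕ) < b then B i j else 0)
        - (if (i:ℕ) < a ∧ (j:ℕ) < b then B i j else 0)
      = if (i:ℕ) = a then (if (j:ℕ) < b then B i j else 0) else 0 := by
    intro i j; split_ifs <;> first | (exfalso; omega) | ring
  simp only [h1]
  have h2 : ∀ i : Fin (m+1),
      (∑ j : Fin (k+1), if (i:ℕ) = a then (if (j:ℕ) < b then B i j else 0) else 0)
      = if (i:ℕ) = a then (∑ j : Fin (k+1), if (j:ℕ) < b then B i j else 0) else 0 := by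
    intro i; split_ifs <;> simp
  simp only [h2, Ssum]
  rw [dif_pos ha]

private lemma pSum_step {m k : ℕ} (B : Matrix (Fin (m+1)) (Fin (k+1)) ℝ)
    (a b : ℕ) (ha : a < m+1) (hb : b < k+1) :
    pSum B (a+1) (b+1) - pSum B a (b+1) - pSum B (a+1) b + pSum B a b
      = B ⟨a, ha⟩ ⟨b, hb⟩ := by
  have h1 := pSum_succ_left B a (b+1) ha
  have h2 := pSum_succ_left B a b ha
  have h3 : (∑ j : Fin (k+1), if (j:ℕ) < b+1 then B ⟨a,ha⟩ j else 0)
      - (∑ j : Fin (k+1), if (j:ℕ) < b then B ⟨a,ha⟩ j else 0) = B ⟨a,ha⟩ ⟨b,hb⟩ := by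
    rw [← Finset.sum_sub_distrib]
    have h4 : ∀ j : Fin (k+1),
        (if (j:ℕ) < b+1 then B ⟨a,ha⟩ j else 0) - (if (j:ℕ) < b then B ⟨a,ha⟩ j else 0)
        = if (j:ℕ) = b then B ⟨a,ha⟩ j else 0 := by
      intro j; split_ifs <;> first | (exfalso; omega) | ring
    simp only [h4, Ssum]
    rw [dif_pos hb]
  linarith

private lemma key_apply {m k : ℕ} (hm : 1 ≤ m) (hk : 1 ≤ k)
    (B : Matrix (Fin (m+1)) (Fin (k+1)) ℝ)
    (hrow : ∀ i₀, ∑ j, B i₀ j = 0) (hcol : ∀ j₀, ∑ i, B i j₀ = 0)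
    (i : Fin (m+1)) (j : Fin (k+1)) :
    ((diffMat m)ᵀ * (Matrix.of fun (p : Fin m) (q : Fin k) => pSum B ((p:ℕ)+1) ((q:ℕ)+1))
        * diffMat k) i j = B i j := by
  set C : Matrix (Fin m) (Fin k) ℝ :=
    Matrix.of fun (p : Fin m) (q : Fin k) => pSum B ((p:ℕ)+1) ((q:ℕ)+1) with hC
  have step1 : ∀ q : Fin k, ((diffMat m)ᵀ * C) i q
      = pSum B (i:ℕ) ((q:ℕ)+1) - pSum B ((i:ℕ)+1) ((q:ℕ)+1) := by
    intro q
    rw [Matrix.mul_apply]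
    have hs : ∀ p : Fin m, (diffMat m)ᵀ i p * C p q
        = (if 1 ≤ (i:ℕ) then (if (p:ℕ) = (i:ℕ)-1 then C p q else 0) else 0)
          - (if (p:ℕ) = (i:ℕ) then C p q else 0) := by
      intro p
      simp only [Matrix.transpose_apply, diffMat, Matrix.of_apply]
      split_ifs <;> first | (exfalso; omega) | ring
    simp only [hs, Finset.sum_sub_distrib]
    rcases Nat.eq_zero_or_pos (i:ℕ) with hi0 | hi1
    · rw [hi0]
      norm_num [Ssum]
      rw [dif_pos (by omega : 0 < m), pSum_zero_left]
      simp only [hC, Matrix.of_apply]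
      ring
    · have ht : (1 ≤ (i:ℕ)) = True := eq_true (by omega)
      simp only [ht, if_true, Ssum]
      rw [dif_pos (show (i:ℕ)-1 < m by omega)]
      by_cases him : (i:ℕ) < m
      · rw [dif_pos him]
        simp only [hC, Matrix.of_apply]
        rw [show (i:ℕ)-1+1 = (i:ℕ) from by omega]
      · rw [dif_neg him]
        have hieq : (i:ℕ) = m := by omega
        simp only [hC, Matrix.of_apply]
        rw [show (i:ℕ)-1+1 = (i:ℕ) from by omega, hieq, pSum_top B hcol]
  rw [Matrix.mul_apply]
  have hs2 : ∀ q : Fin k, ((diffMat m)ᵀ * C) i q * diffMat k q j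
      = (if 1 ≤ (j:ℕ) then (if (q:ℕ) = (j:ℕ)-1 then ((diffMat m)ᵀ * C) i q else 0) else 0)
        - (if (q:ℕ) = (j:ℕ) then ((diffMat m)ᵀ * C) i q else 0) := by
    intro q
    simp only [diffMat, Matrix.of_apply]
    split_ifs <;> first | (exfalso; omega) | ring
  have main : (∑ q : Fin k, ((diffMat m)ᵀ * C) i q * diffMat k q j)
      = (pSum B (i:ℕ) (j:ℕ) - pSum B ((i:ℕ)+1) (j:ℕ))
        - (pSum B (i:ℕ) ((j:ℕ)+1) - pSum B ((i:ℕ)+1) ((j:ℕ)+1)) := by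
    simp only [hs2, Finset.sum_sub_distrib]
    rcases Nat.eq_zero_or_pos (j:ℕ) with hj0 | hj1
    · rw [hj0]
      norm_num [Ssum]
      rw [dif_pos (by omega : 0 < k), step1, pSum_zero_right, pSum_zero_right]
      ring
    · have ht : (1 ≤ (j:ℕ)) = True := eq_true (by omega)
      simp only [ht, if_true, Ssum]
      rw [dif_pos (show (j:ℕ)-1 < k by omega), step1]
      by_cases hjk : (j:ℕ) < k
      · rw [dif_pos hjk, step1]
        rw [show (j:ℕ)-1+1 = (j:ℕ) from by omega]
      · rw [dif_neg hjk]
        have hjeq : (j:ℕ) = k := by omega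
        rw [show (j:ℕ)-1+1 = (j:ℕ) from by omega, hjeq, pSum_right B hrow, pSum_right B hrow]
        ring
  rw [main]
  have hstep := pSum_step B (i:ℕ) (j:ℕ) i.isLt j.isLt
  simp only [Fin.eta] at hstep
  linarith

theorem kernel_mixed_difference (m k : ℕ) (hm : 1 ≤ m) (hk : 1 ≤ k) :
    (∀ A : Matrix (Fin (m + 1)) (Fin (k + 1)) ℝ,
      diffMat m * A * (diffMat k)ᵀ = 0 ↔
        ∃ (u : Fin (m + 1) → ℝ) (v : Fin (k + 1) → ℝ), ∀ i j, A i j = u i + v j) ∧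
    (∀ B : Matrix (Fin (m + 1)) (Fin (k + 1)) ℝ,
      (∀ A : Matrix (Fin (m + 1)) (Fin (k + 1)) ℝ,
          diffMat m * A * (diffMat k)ᵀ = 0 → (∑ i, ∑ j, B i j * A i j) = 0) ↔
        ∃ C : Matrix (Fin m) (Fin k) ℝ, B = (diffMat m)ᵀ * C * diffMat k) := by
  refine ⟨fun A => part1 A, fun B => ⟨fun hB => ?_, ?_⟩⟩
  · -- orthogonality implies B is a mixed second difference
    have hrow : ∀ i₀, ∑ j, B i₀ j = 0 := by
      intro i₀
      have hker : diffMat m * (Matrix.of fun i (_ : Fin (k+1)) => if i = i₀ then (1:ℝ) else 0)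
          * (diffMat k)ᵀ = 0 :=
        (part1 _).mpr ⟨fun i => if i = i₀ then 1 else 0, fun _ => 0, fun i j => by simp⟩
      have h := hB _ hker
      simp only [Matrix.of_apply, mul_ite, mul_one, mul_zero] at h
      rw [Finset.sum_comm] at h
      simpa [Finset.sum_ite_eq'] using h
    have hcol : ∀ j₀, ∑ i, B i j₀ = 0 := by
      intro j₀
      have hker : diffMat m * (Matrix.of fun (_ : Fin (m+1)) j => if j = j₀ then (1:ℝ) else 0)
          * (diffMat k)ᵀ = 0 :=
        (part1 _).mpr ⟨fun _ => 0, fun j => if j = j₀ then 1 else 0, fun i j => by simp⟩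
      have h := hB _ hker
      simp only [Matrix.of_apply, mul_ite, mul_one, mul_zero] at h
      simpa [Finset.sum_ite_eq'] using h
    exact ⟨Matrix.of fun (p : Fin m) (q : Fin k) => pSum B ((p:ℕ)+1) ((q:ℕ)+1),
      by ext i j; exact (key_apply hm hk B hrow hcol i j).symm⟩
  · rintro ⟨C, rfl⟩ A hA
    have hA' : diffMat m * (A * (diffMat k)ᵀ) = 0 := by rw [← Matrix.mul_assoc]; exact hA
    calc ∑ i, ∑ j, ((diffMat m)ᵀ * C * diffMat k) i j * A i j
        = Matrix.trace (((diffMat m)ᵀ * C * diffMat k)ᵀ * A) := inner_eq_trace _ _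
      _ = Matrix.trace ((diffMat k)ᵀ * (Cᵀ * (diffMat m * A))) := by
          rw [Matrix.transpose_mul, Matrix.transpose_mul, Matrix.transpose_transpose,
            Matrix.mul_assoc, Matrix.mul_assoc]
      _ = Matrix.trace (Cᵀ * (diffMat m * A) * (diffMat k)ᵀ) := Matrix.trace_mul_comm _ _
      _ = Matrix.trace (Cᵀ * (diffMat m * (A * (diffMat k)ᵀ))) := by
          rw [Matrix.mul_assoc, Matrix.mul_assoc]
      _ = 0 := by rw [hA', Matrix.mul_zero, Matrix.trace_zero]
end

section
/- There is a universal constant C > 0 such that for all integers n1 ≥ n2 ≥ 2, every integer k ≥ 1 and every (i, j) ∈ [n1−1] × [n2−1], one has Σ_{(l,r)} [ sin²(π i l / n1) sin²(π j r / n2) ] / [ 4 n1 n2 sin²(π l / (2 n1)) sin²(π r / (2 n2)) ] ≤ C (n1 n2 / k) log(n2 + 1), where the sum is over all pairs (l, r) ∈ [n1−1] × [n2−1] with l r > k. -/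
/-!
By Jordan's inequality `sin (π l / 2n) ≥ l / n`, each summand is at most `n₁ n₂ / (4 l² r²)`.
For fixed `r`, the terms with `l r > k` have `l > k / r`, so they sum to at most `2 r / k`;
summing `r⁻² · 2 r / k` over `r < n₂` leaves `2 / k` times a harmonic sum, i.e. `O(log n₂ / k)`.
-/

open Finset Real

lemma le_sin_pi_mul_div_two {x : ℝ} (hx₀ : 0 ≤ x) (hx₁ : x ≤ 1) : x ≤ sin (π * x / 2) := by
  have h := mul_le_sin (x := π * x / 2) (by positivity) (by nlinarith [pi_pos])
  rwa [show 2 / π * (π * x / 2) = x by field_simp] at h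

lemma natCast_div_le_sin_pi_mul_div_two_mul {l n : ℕ} (hln : l ≤ n) :
    (l / n : ℝ) ≤ sin (π * l / (2 * n)) := by
  rw [show π * l / (2 * n) = π * (l / n : ℝ) / 2 by ring]
  exact le_sin_pi_mul_div_two (by positivity)
    (div_le_one_of_le₀ (by exact_mod_cast hln) (by positivity))

lemma sin_sq_mul_sin_sq_div_le {n₁ n₂ l r : ℕ} (hl : 1 ≤ l) (hln : l ≤ n₁) (hr : 1 ≤ r)
    (hrn : r ≤ n₂) (a b : ℝ) :
    sin a ^ 2 * sin b ^ 2 /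
        (4 * n₁ * n₂ * sin (π * l / (2 * n₁)) ^ 2 * sin (π * r / (2 * n₂)) ^ 2)
      ≤ n₁ * n₂ / 4 * (((l : ℝ) ^ 2)⁻¹ * ((r : ℝ) ^ 2)⁻¹) := by
  have hl₀ : (0 : ℝ) < l := by exact_mod_cast hl
  have hr₀ : (0 : ℝ) < r := by exact_mod_cast hr
  have hn₁ : (0 : ℝ) < n₁ := by exact_mod_cast hl.trans hln
  have hn₂ : (0 : ℝ) < n₂ := by exact_mod_cast hr.trans hrn
  have hs := pow_le_pow_left₀ (by positivity) (natCast_div_le_sin_pi_mul_div_two_mul hln) 2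
  have ht := pow_le_pow_left₀ (by positivity) (natCast_div_le_sin_pi_mul_div_two_mul hrn) 2
  have hnum : sin a ^ 2 * sin b ^ 2 ≤ 1 :=
    mul_le_one₀ (sin_sq_le_one a) (sq_nonneg _) (sin_sq_le_one b)
  calc _ ≤ 1 / (4 * n₁ * n₂ * (l / n₁ : ℝ) ^ 2 * (r / n₂ : ℝ) ^ 2) := by
        gcongr
    _ = _ := by field_simp

lemma sum_inv_sq_of_lt_mul_le {k r : ℕ} (hk : 0 < k) (hr : 0 < r) (N : ℕ) :
    ∑ l ∈ Icc 1 N, (if k < l * r then ((l : ℝ) ^ 2)⁻¹ else 0) ≤ 2 * r / k := by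
  have hsub : {l ∈ Icc 1 N | k < l * r} ⊆ Ioo (k / r) (N + 1) := fun l hl => by
    simp only [mem_filter, mem_Icc, mem_Ioo] at hl ⊢
    exact ⟨(Nat.div_lt_iff_lt_mul hr).2 hl.2, by omega⟩
  have hkm : (k : ℝ) ≤ (k / r + 1 : ℕ) * r := by
    exact_mod_cast (Nat.lt_mul_of_div_lt (Nat.lt_succ_self _) hr).le
  rw [← sum_filter]
  calc _ ≤ ∑ l ∈ Ioo (k / r) (N + 1), ((l : ℝ) ^ 2)⁻¹ :=
        sum_le_sum_of_subset_of_nonneg hsub fun _ _ _ => by positivity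
    _ ≤ 2 / ((k / r : ℕ) + 1) := sum_Ioo_inv_sq_le _ _
    _ ≤ 2 * r / k := by
        rw [div_le_div_iff₀ (by positivity) (by exact_mod_cast hk)]
        push_cast at hkm
        nlinarith

lemma sum_Icc_inv_le_one_add_log (n : ℕ) : ∑ r ∈ Icc 1 n, (r : ℝ)⁻¹ ≤ 1 + log n := by
  have h := harmonic_le_one_add_log n
  simpa only [harmonic_eq_sum_Icc, Rat.cast_sum, Rat.cast_inv, Rat.cast_natCast] using h

lemma sum_sum_inv_sq_mul_inv_sq_of_lt_mul_le {k : ℕ} (hk : 0 < k) (N₁ N₂ : ℕ) :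
    ∑ l ∈ Icc 1 N₁, ∑ r ∈ Icc 1 N₂,
        (if k < l * r then ((l : ℝ) ^ 2)⁻¹ * ((r : ℝ) ^ 2)⁻¹ else 0)
      ≤ 2 / k * (1 + log N₂) := by
  rw [sum_comm]
  calc _ = ∑ r ∈ Icc 1 N₂, ((r : ℝ) ^ 2)⁻¹ *
          ∑ l ∈ Icc 1 N₁, (if k < l * r then ((l : ℝ) ^ 2)⁻¹ else 0) := by
        simp only [mul_sum, mul_ite, mul_zero, mul_comm]
    _ ≤ ∑ r ∈ Icc 1 N₂, ((r : ℝ) ^ 2)⁻¹ * (2 * r / k) := by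
        gcongr with r hr
        exact sum_inv_sq_of_lt_mul_le hk (mem_Icc.1 hr).1 N₁
    _ = 2 / k * ∑ r ∈ Icc 1 N₂, (r : ℝ)⁻¹ := by
        rw [mul_sum]
        refine sum_congr rfl fun r hr => ?_
        have : (r : ℝ) ≠ 0 := by have := (mem_Icc.1 hr).1; positivity
        field_simp
    _ ≤ 2 / k * (1 + log N₂) := by
        gcongr
        exact sum_Icc_inv_le_one_add_log N₂

lemma one_add_log_pred_le_two_mul_log_succ {n : ℕ} (hn : 2 ≤ n) :
    1 + log (n - 1 : ℕ) ≤ 2 * log (n + 1) := by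
  have hn' : (2 : ℝ) ≤ n := by exact_mod_cast hn
  have h₁ : 1 ≤ log (n + 1) := by
    rw [le_log_iff_exp_le (by positivity)]
    linarith [exp_one_lt_three]
  have h₂ : log (n - 1 : ℕ) ≤ log (n + 1) := by
    rw [Nat.cast_sub (by omega), Nat.cast_one]
    exact log_le_log (by linarith) (by linarith)
  linarith

theorem sine_sum_bound :
    ∃ C : ℝ, 0 < C ∧
      ∀ n₁ n₂ k i j : ℕ, 2 ≤ n₂ → n₂ ≤ n₁ → 1 ≤ k →
        1 ≤ i → i ≤ n₁ - 1 → 1 ≤ j → j ≤ n₂ - 1 →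
        (∑ l ∈ Finset.Icc 1 (n₁ - 1), ∑ r ∈ Finset.Icc 1 (n₂ - 1),
            if k < l * r then
              Real.sin (Real.pi * i * l / n₁) ^ 2 * Real.sin (Real.pi * j * r / n₂) ^ 2 /
                (4 * n₁ * n₂ * Real.sin (Real.pi * l / (2 * n₁)) ^ 2 *
                  Real.sin (Real.pi * r / (2 * n₂)) ^ 2)
            else 0)
          ≤ C * ((n₁ * n₂ : ℝ) / k) * Real.log (n₂ + 1) := by
  refine ⟨1, one_pos, fun n₁ n₂ k i j hn₂ _ hk _ _ _ _ => ?_⟩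
  calc _ ≤ ∑ l ∈ Icc 1 (n₁ - 1), ∑ r ∈ Icc 1 (n₂ - 1), (n₁ * n₂ / 4 : ℝ) *
          (if k < l * r then ((l : ℝ) ^ 2)⁻¹ * ((r : ℝ) ^ 2)⁻¹ else 0) := by
        gcongr with l hl r hr
        rw [mul_ite, mul_zero]
        split_ifs
        · exact sin_sq_mul_sin_sq_div_le (mem_Icc.1 hl).1 (by have := (mem_Icc.1 hl).2; omega)
            (mem_Icc.1 hr).1 (by have := (mem_Icc.1 hr).2; omega) _ _
        · rfl
    _ ≤ n₁ * n₂ / 4 * (2 / k * (1 + log (n₂ - 1 : ℕ))) := by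
        simp only [← mul_sum]
        gcongr
        exact sum_sum_inv_sq_mul_inv_sq_of_lt_mul_le hk _ _
    _ ≤ n₁ * n₂ / 4 * (2 / k * (2 * log (n₂ + 1))) := by
        gcongr
        exact one_add_log_pred_le_two_mul_log_succ hn₂
    _ = 1 * ((n₁ * n₂ : ℝ) / k) * log (n₂ + 1) := by ring
end

section
/- Let X_1, …, X_N be finitely many points of [0,1]² whose first coordinates are pairwise distinct and lie in the open interval (0,1). Then for every M ∈ ℝ there exists an MTP2 probability density ρ on [0,1]² (with respect to the Lebesgue measure) such that Σ_{i=1}^N log ρ(X_i) > M. Consequently, the supremum of the log-likelihood Σ_{i=1}^N log ρ(X_i) over all MTP2 densities ρ on [0,1]² is +∞, and a maximum likelihood estimator over the MTP2 class does not exist. -/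
open MeasureTheory

noncomputable section

/-- The unit square `[0,1]² ⊆ ℝ²`. -/
def unitSq : Set (ℝ × ℝ) := Set.Icc (0 : ℝ) 1 ×ˢ Set.Icc (0 : ℝ) 1

/-- `ρ` is an MTP₂ probability density on `[0,1]²` with respect to the Lebesgue measure. -/
def IsMTP2Density (ρ : ℝ × ℝ → ℝ) : Prop :=
  Measurable ρ ∧ (∀ z ∈ unitSq, 0 ≤ ρ z) ∧ (∫ z in unitSq, ρ z) = 1 ∧
    ∀ z ∈ unitSq, ∀ w ∈ unitSq,
      ρ z * ρ w ≤ ρ (min z.1 w.1, min z.2 w.2) * ρ (max z.1 w.1, max z.2 w.2)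

/-!
A density that depends only on the first coordinate satisfies the MTP₂ inequality with equality:
taking coordinatewise min and max merely swaps the two factors. Spreading mass `1/N` uniformly over
an interval of half-width `ε` around each `(X k).1` gives such a density of height at least
`(2Nε)⁻¹` at every data point, so its log-likelihood is at least `N log (2Nε)⁻¹ → ∞` as `ε → 0⁺`.
-/

open Set Filter Topology

lemma isMTP2Density_comp_fst {f : ℝ → ℝ} (hf : Measurable f) (h0 : ∀ t ∈ Icc (0 : ℝ) 1, 0 ≤ f t)
    (h1 : ∫ t in Icc (0 : ℝ) 1, f t = 1) :
    IsMTP2Density (fun z => f z.1) := by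
  refine ⟨hf.comp measurable_fst, fun z hz => h0 z.1 hz.1, ?_, fun z _ w _ => ?_⟩
  · have := integral_prod_mul (μ := volume.restrict (Icc (0 : ℝ) 1))
      (ν := volume.restrict (Icc (0 : ℝ) 1)) f (fun _ => (1 : ℝ))
    rw [unitSq, Measure.volume_eq_prod, ← Measure.prod_restrict]
    simpa [h1] using this
  · rcases le_total z.1 w.1 with h | h
    · rw [min_eq_left h, max_eq_right h]
    · rw [min_eq_right h, max_eq_left h, mul_comm]

lemma eventually_Icc_subset_unitInterval {a : ℝ} (ha : a ∈ Ioo (0 : ℝ) 1) :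
    ∀ᶠ ε in 𝓝[>] 0, Icc (a - ε) (a + ε) ⊆ Icc 0 1 := by
  filter_upwards [Ioo_mem_nhdsGT (lt_min ha.1 (sub_pos.2 ha.2))] with ε hε
  exact Icc_subset_Icc (by linarith [min_le_left a (1 - a), hε.2])
    (by linarith [min_le_right a (1 - a), hε.2])

section BumpDensity

variable {ι : Type*} [Fintype ι]

def bumpDensity (x : ι → ℝ) (ε t : ℝ) : ℝ :=
  (2 * Fintype.card ι * ε)⁻¹ * ∑ k, (Icc (x k - ε) (x k + ε)).indicator 1 t

lemma measurable_bumpDensity (x : ι → ℝ) (ε : ℝ) : Measurable (bumpDensity x ε) :=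
  (Finset.measurable_sum _ fun _ _ => measurable_const.indicator measurableSet_Icc).const_mul _

lemma bumpDensity_nonneg (x : ι → ℝ) {ε : ℝ} (hε : 0 ≤ ε) (t : ℝ) : 0 ≤ bumpDensity x ε t :=
  mul_nonneg (by positivity)
    (Finset.sum_nonneg fun _ _ => indicator_nonneg (fun _ _ => zero_le_one) t)

lemma inv_le_bumpDensity (x : ι → ℝ) {ε : ℝ} (hε : 0 ≤ ε) (k : ι) :
    (2 * Fintype.card ι * ε)⁻¹ ≤ bumpDensity x ε (x k) := by
  refine le_mul_of_one_le_right (by positivity) ?_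
  calc (1 : ℝ) = (Icc (x k - ε) (x k + ε)).indicator 1 (x k) :=
        (indicator_of_mem (mem_Icc.2 ⟨by linarith, by linarith⟩) (1 : ℝ → ℝ)).symm
    _ ≤ ∑ j, (Icc (x j - ε) (x j + ε)).indicator 1 (x k) :=
        Finset.single_le_sum (f := fun j => (Icc (x j - ε) (x j + ε)).indicator 1 (x k))
          (fun j _ => indicator_nonneg (fun _ _ => zero_le_one) _) (Finset.mem_univ k)

lemma integral_bumpDensity [Nonempty ι] (x : ι → ℝ) {ε : ℝ} (hε : 0 < ε)
    (hsub : ∀ k, Icc (x k - ε) (x k + ε) ⊆ Icc 0 1) :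
    ∫ t in Icc (0 : ℝ) 1, bumpDensity x ε t = 1 := by
  have hbump : ∀ k, ∫ t in Icc (0 : ℝ) 1, (Icc (x k - ε) (x k + ε)).indicator 1 t = 2 * ε := by
    intro k
    rw [integral_indicator_one measurableSet_Icc, measureReal_restrict_apply measurableSet_Icc,
      inter_eq_left.2 (hsub k), Real.volume_real_Icc_of_le (by linarith)]
    ring
  have hint : ∀ k, Integrable ((Icc (x k - ε) (x k + ε)).indicator (1 : ℝ → ℝ))
      (volume.restrict (Icc (0 : ℝ) 1)) := fun k =>
    (integrable_const (1 : ℝ)).indicator measurableSet_Icc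
  simp only [bumpDensity]
  rw [integral_const_mul, integral_finsetSum _ fun k _ => hint k]
  simp only [hbump, Finset.sum_const, Finset.card_univ, nsmul_eq_mul]
  have : (Fintype.card ι : ℝ) ≠ 0 := Nat.cast_ne_zero.2 Fintype.card_ne_zero
  field_simp

lemma tendsto_sum_log_bumpDensity [Nonempty ι] (x : ι → ℝ) :
    Tendsto (fun ε => ∑ k, Real.log (bumpDensity x ε (x k))) (𝓝[>] 0) atTop := by
  have hcard : (0 : ℝ) < Fintype.card ι := Nat.cast_pos.2 Fintype.card_pos
  have hlower : Tendsto (fun ε : ℝ => Fintype.card ι * Real.log ((2 * Fintype.card ι * ε)⁻¹))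
      (𝓝[>] 0) atTop := by
    simp_rw [mul_inv]
    exact (Real.tendsto_log_atTop.comp
      (tendsto_inv_nhdsGT_zero.const_mul_atTop (by positivity))).const_mul_atTop hcard
  refine tendsto_atTop_mono' _ ?_ hlower
  filter_upwards [self_mem_nhdsWithin] with ε (hε : 0 < ε)
  calc (Fintype.card ι : ℝ) * Real.log ((2 * Fintype.card ι * ε)⁻¹)
      = ∑ _k : ι, Real.log ((2 * Fintype.card ι * ε)⁻¹) := by simp
    _ ≤ ∑ k, Real.log (bumpDensity x ε (x k)) := Finset.sum_le_sum fun k _ =>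
      Real.log_le_log (by positivity) (inv_le_bumpDensity x hε.le k)

end BumpDensity

theorem mle_nonexistence_general {N : ℕ} (hN : 0 < N) (X : Fin N → ℝ × ℝ)
    (hfirst : ∀ k, (X k).1 ∈ Set.Ioo (0 : ℝ) 1) :
    (∀ M : ℝ, ∃ ρ, IsMTP2Density ρ ∧ M < ∑ k, Real.log (ρ (X k))) ∧
    ¬∃ ρ₀, IsMTP2Density ρ₀ ∧
      ∀ ρ, IsMTP2Density ρ → ∑ k, Real.log (ρ (X k)) ≤ ∑ k, Real.log (ρ₀ (X k)) := by
  have : Nonempty (Fin N) := ⟨⟨0, hN⟩⟩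
  have hunbounded (M : ℝ) : ∃ ρ, IsMTP2Density ρ ∧ M < ∑ k, Real.log (ρ (X k)) := by
    have hsub : ∀ᶠ ε in 𝓝[>] 0, ∀ k, Icc ((X k).1 - ε) ((X k).1 + ε) ⊆ Icc 0 1 :=
      eventually_all.2 fun k => eventually_Icc_subset_unitInterval (hfirst k)
    obtain ⟨ε, hεsub, hεM, hεpos⟩ :=
      (hsub.and (((tendsto_sum_log_bumpDensity fun k => (X k).1).eventually_gt_atTop M).and
        self_mem_nhdsWithin)).exists
    exact ⟨fun z => bumpDensity (fun k => (X k).1) ε z.1,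
      isMTP2Density_comp_fst (measurable_bumpDensity _ ε)
        (fun t _ => bumpDensity_nonneg _ hεpos.le t) (integral_bumpDensity _ hεpos hεsub),
      hεM⟩
  refine ⟨hunbounded, fun ⟨ρ₀, _, hmax⟩ => ?_⟩
  obtain ⟨ρ, hρ, hgt⟩ := hunbounded (∑ k, Real.log (ρ₀ (X k)))
  exact (hmax ρ hρ).not_gt hgt

theorem mle_nonexistence {N : ℕ} (hN : 0 < N) (X : Fin N → ℝ × ℝ)
    (hX : ∀ k, X k ∈ unitSq)
    (hfirst : ∀ k, (X k).1 ∈ Set.Ioo (0 : ℝ) 1)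
    (hdistinct : ∀ k l, k ≠ l → (X k).1 ≠ (X l).1) :
    (∀ M : ℝ, ∃ ρ, IsMTP2Density ρ ∧ M < ∑ k, Real.log (ρ (X k))) ∧
    ¬∃ ρ₀, IsMTP2Density ρ₀ ∧
      ∀ ρ, IsMTP2Density ρ → ∑ k, Real.log (ρ (X k)) ≤ ∑ k, Real.log (ρ₀ (X k)) :=
  mle_nonexistence_general hN X hfirst
end
end

section
/- Let m, N ≥ 1, let p ∈ (0,1)^m with Σ_i p_i = 1, let I_1, …, I_N be i.i.d. random variables taking the value i ∈ [m] with probability p_i, and let Y ∈ ℝ^m be defined by Y_i = Σ_{j=1}^N 1{I_j = i} (so Y is multinomial(N, p)). Then for every a ∈ ℝ^m and every t ≥ 0, P( |⟨Y − N p, a⟩| ≥ t ) ≤ 2 exp( −3 t² / (6 N ‖a‖_p² + 4 ‖a‖_∞ t) ), where ‖a‖_p² = Σ_{i=1}^m p_i a_i². -/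
/-!
Against `a`, the centred multinomial vector is the i.i.d. sum `∑ⱼ (a (I j) - μ)` with
`μ = ∑ i, p i * a i`, whose summands are centred, bounded by `2 ‖a‖_∞` and have variance at most
`‖a‖_p²`, so the claim is Bernstein's inequality. The Chernoff bound reduces the tail to the moment
generating function, which `exp x ≤ 1 + x + x ^ 2 / (2 * (1 - c / 3))` (for `x ≤ c < 3`) bounds by
a Gaussian one, and `λ = t / (N v + b t / 3)` balances the two exponents.
-/

open Real Finset

namespace Real

lemma exp_le_one_add_add_sq_div_two_of_nonpos {x : ℝ} (hx : x ≤ 0) :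
    exp x ≤ 1 + x + x ^ 2 / 2 := by
  have hanti : Antitone fun y => 1 + y + y ^ 2 / 2 - exp y := by
    refine antitone_of_hasDerivAt_nonpos (f' := fun y => 1 + y - exp y) (fun y => ?_)
      fun y => show 1 + y - exp y ≤ 0 by linarith [add_one_le_exp y]
    refine ((((hasDerivAt_id y).const_add 1).add ((hasDerivAt_pow 2 y).div_const 2)).sub
      (hasDerivAt_exp y)).congr_deriv ?_
    norm_num
  simpa using hanti hx

lemma two_sub_mul_exp_le_two_add {x : ℝ} (hx : 0 ≤ x) : (2 - x) * exp x ≤ 2 + x := by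
  have hmono : Monotone fun y => 2 + y - (2 - y) * exp y := by
    refine monotone_of_hasDerivAt_nonneg (f' := fun y => 1 - (1 - y) * exp y) (fun y => ?_)
      fun y => ?_
    · refine (((hasDerivAt_id y).const_add 2).sub
        (((hasDerivAt_id y).const_sub 2).mul (hasDerivAt_exp y))).congr_deriv ?_
      simp only [id]; ring
    · have h := mul_le_mul_of_nonneg_right (one_sub_le_exp_neg y) (exp_pos y).le
      rw [← exp_add, neg_add_cancel, exp_zero] at h
      exact sub_nonneg.2 h
  simpa using hmono hx

lemma three_sub_mul_exp_le {x : ℝ} (hx : 0 ≤ x) : (3 - x) * exp x ≤ 3 + 2 * x + x ^ 2 / 2 := by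
  have hmono : MonotoneOn (fun y => 3 + 2 * y + y ^ 2 / 2 - (3 - y) * exp y) (Set.Ici 0) := by
    refine monotoneOn_of_hasDerivWithinAt_nonneg (f' := fun y => 2 + y - (2 - y) * exp y)
      (convex_Ici 0) (by fun_prop) (fun y _ => HasDerivAt.hasDerivWithinAt ?_) fun y hy => ?_
    · refine ((((hasDerivAt_id y).const_mul 2).const_add 3 |>.add
        ((hasDerivAt_pow 2 y).div_const 2)).sub
        (((hasDerivAt_id y).const_sub 3).mul (hasDerivAt_exp y))).congr_deriv ?_
      norm_num; ring
    · rw [interior_Ici] at hy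
      exact sub_nonneg.2 (two_sub_mul_exp_le_two_add (le_of_lt hy))
  simpa using hmono Set.self_mem_Ici hx hx

theorem exp_le_one_add_add_sq_div {x c : ℝ} (hxc : x ≤ c) (hc₀ : 0 ≤ c) (hc₃ : c < 3) :
    exp x ≤ 1 + x + x ^ 2 / (2 * (1 - c / 3)) := by
  have hd : 0 < 2 * (1 - c / 3) := by linarith
  rcases le_total x 0 with hx | hx
  · have : x ^ 2 / 2 ≤ x ^ 2 / (2 * (1 - c / 3)) :=
      div_le_div_of_nonneg_left (sq_nonneg x) hd (by linarith)
    linarith [exp_le_one_add_add_sq_div_two_of_nonpos hx]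
  · have hrem : 0 ≤ exp x - 1 - x := by linarith [add_one_le_exp x]
    have : (exp x - 1 - x) * (2 * (1 - c / 3)) ≤ x ^ 2 := by
      nlinarith [three_sub_mul_exp_le hx, mul_le_mul_of_nonneg_left hxc hrem]
    linarith [(le_div_iff₀ hd).2 this]

end Real

section IIDSum

variable {α : Type*} [Fintype α] {p X : α → ℝ}

theorem sum_ite_le_exp_mul_mgf_pow (hp : ∀ i, 0 ≤ p i) (N : ℕ) (t : ℝ) {l : ℝ} (hl : 0 ≤ l) :
    (∑ z : Fin N → α, if t ≤ ∑ j, X (z j) then ∏ j, p (z j) else 0)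
      ≤ exp (-(l * t)) * (∑ i, p i * exp (l * X i)) ^ N := by
  rw [Fintype.sum_pow, mul_sum]
  refine sum_le_sum fun z _ => ?_
  have hw : 0 ≤ ∏ j, p (z j) := prod_nonneg fun j _ => hp _
  rw [prod_mul_distrib, ← exp_sum, mul_left_comm, ← exp_add, ← mul_sum]
  split_ifs with h
  · exact le_mul_of_one_le_right hw (one_le_exp (by nlinarith))
  · positivity

theorem sum_mul_exp_mul_le_exp_bernstein (hp : ∀ i, 0 ≤ p i) (hp₁ : ∑ i, p i = 1)
    (hX₀ : ∑ i, p i * X i = 0) {b v l : ℝ} (hXb : ∀ i, X i ≤ b) (hXv : ∑ i, p i * X i ^ 2 ≤ v)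
    (hl : 0 ≤ l) (hb : 0 ≤ b) (hlb : l * b < 3) :
    ∑ i, p i * exp (l * X i) ≤ exp (l ^ 2 * v / (2 * (1 - l * b / 3))) := by
  have hd : 0 < 2 * (1 - l * b / 3) := by linarith
  set d := 2 * (1 - l * b / 3)
  calc ∑ i, p i * exp (l * X i)
      ≤ ∑ i, p i * (1 + l * X i + (l * X i) ^ 2 / d) := by
        gcongr with i
        · exact hp i
        · exact exp_le_one_add_add_sq_div (mul_le_mul_of_nonneg_left (hXb i) hl)
            (mul_nonneg hl hb) hlb
    _ = 1 + l ^ 2 / d * ∑ i, p i * X i ^ 2 := by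
        have (i : α) : p i * (1 + l * X i + (l * X i) ^ 2 / d)
            = p i + l * (p i * X i) + l ^ 2 / d * (p i * X i ^ 2) := by ring
        simp_rw [this, sum_add_distrib, ← mul_sum, hp₁, hX₀, mul_zero, add_zero]
    _ ≤ 1 + l ^ 2 * v / d := by
        rw [mul_div_right_comm]; gcongr
    _ ≤ exp (l ^ 2 * v / d) := by linarith [add_one_le_exp (l ^ 2 * v / d)]

theorem sum_ite_le_exp_bernstein (hp : ∀ i, 0 ≤ p i) (hp₁ : ∑ i, p i = 1)
    (hX₀ : ∑ i, p i * X i = 0) {b v : ℝ} (hXb : ∀ i, X i ≤ b) (hXv : ∑ i, p i * X i ^ 2 ≤ v)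
    (N : ℕ) {t : ℝ} (ht : 0 ≤ t) :
    (∑ z : Fin N → α, if t ≤ ∑ j, X (z j) then ∏ j, p (z j) else 0)
      ≤ exp (-t ^ 2 / (2 * (N * v + b * t / 3))) := by
  have hb : 0 ≤ b := by
    calc 0 = ∑ i, p i * X i := hX₀.symm
      _ ≤ ∑ i, p i * b := by gcongr with i; exacts [hp i, hXb i]
      _ = b := by rw [← sum_mul, hp₁, one_mul]
  have hterm : ∀ i, 0 ≤ p i * X i ^ 2 := fun i => mul_nonneg (hp i) (sq_nonneg _)
  have hv : 0 ≤ v := (sum_nonneg fun i _ => hterm i).trans hXv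
  rcases ht.eq_or_lt with rfl | ht
  · calc _ ≤ ∑ z : Fin N → α, ∏ j, p (z j) :=
          sum_le_sum fun z _ => by
            split_ifs
            exacts [le_rfl, prod_nonneg fun j _ => hp _]
      _ = exp (-0 ^ 2 / (2 * (N * v + b * 0 / 3))) := by
          rw [← Fintype.sum_pow, hp₁]; simp
  rcases (mul_nonneg N.cast_nonneg hv).eq_or_lt with hNv | hNv
  · -- the choice of `l` below needs `N * v > 0`; otherwise the event has probability zero
    refine le_of_eq_of_le (sum_eq_zero fun z _ => ite_eq_right_iff.2 fun hz => ?_) (exp_nonneg _)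
    by_contra hw
    have hX : ∀ j, X (z j) = 0 := fun j => by
      have hv0 : v = 0 := by
        simpa [Nat.pos_iff_ne_zero.1 (Fin.pos j)] using hNv.symm
      have := (sum_eq_zero_iff_of_nonneg fun i _ => hterm i).1
        (le_antisymm (hv0 ▸ hXv) (sum_nonneg fun i _ => hterm i)) (z j) (mem_univ _)
      simpa [prod_ne_zero_iff.1 hw j (mem_univ j)] using this
    simp [hX] at hz
    linarith
  set D := N * v + b * t / 3
  have hD : 0 < D := by positivity
  set l := t / D
  have hl : 0 ≤ l := by positivity
  have hslack : 1 - l * b / 3 = N * v / D := by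
    simp only [l, D]; field_simp; ring
  have hlb : l * b < 3 := by
    have : 0 < 1 - l * b / 3 := by rw [hslack]; positivity
    linarith
  have hmgf := sum_mul_exp_mul_le_exp_bernstein hp hp₁ hX₀ hXb hXv hl hb hlb
  calc _ ≤ exp (-(l * t)) * (∑ i, p i * exp (l * X i)) ^ N :=
        sum_ite_le_exp_mul_mgf_pow hp N t hl
    _ ≤ exp (-(l * t)) * exp (l ^ 2 * v / (2 * (1 - l * b / 3))) ^ N := by
        gcongr
        exact sum_nonneg fun i _ => mul_nonneg (hp i) (exp_pos _).le
    _ = exp (-t ^ 2 / (2 * D)) := by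
        rw [← exp_nat_mul, ← exp_add, hslack]
        congr 1
        obtain ⟨hN, hv₀⟩ := mul_ne_zero_iff.1 hNv.ne'
        simp only [l]
        field_simp
        ring

theorem sum_ite_abs_le_two_mul_exp_bernstein (hp : ∀ i, 0 ≤ p i) (hp₁ : ∑ i, p i = 1)
    (hX₀ : ∑ i, p i * X i = 0) {b v : ℝ} (hXb : ∀ i, |X i| ≤ b)
    (hXv : ∑ i, p i * X i ^ 2 ≤ v) (N : ℕ) {t : ℝ} (ht : 0 ≤ t) :
    (∑ z : Fin N → α, if t ≤ |∑ j, X (z j)| then ∏ j, p (z j) else 0)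
      ≤ 2 * exp (-t ^ 2 / (2 * (N * v + b * t / 3))) := by
  have upper := sum_ite_le_exp_bernstein hp hp₁ hX₀ (fun i => (le_abs_self _).trans (hXb i))
    hXv N ht
  have lower := sum_ite_le_exp_bernstein (X := fun i => -X i) hp hp₁
    (by simp [hX₀]) (fun i => (neg_le_abs _).trans (hXb i)) (by simpa using hXv) N ht
  calc _ ≤ ∑ z : Fin N → α, ((if t ≤ ∑ j, X (z j) then ∏ j, p (z j) else 0)
          + if t ≤ ∑ j, -X (z j) then ∏ j, p (z j) else 0) :=
        sum_le_sum fun z _ => by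
          have hw : 0 ≤ ∏ j, p (z j) := prod_nonneg fun j _ => hp _
          rw [sum_neg_distrib]
          split_ifs <;> grind [le_abs]
    _ ≤ _ := by rw [sum_add_distrib, two_mul]; exact add_le_add upper lower

end IIDSum

section WeightedMean

variable {ι : Type*} [Fintype ι] {p a : ι → ℝ}

lemma sum_mul_sub_weighted_mean (hp₁ : ∑ i, p i = 1) :
    ∑ i, p i * (a i - ∑ k, p k * a k) = 0 := by
  simp [mul_sub, sum_sub_distrib, ← sum_mul, hp₁]

lemma sum_mul_sub_weighted_mean_sq_le (hp₁ : ∑ i, p i = 1) :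
    ∑ i, p i * (a i - ∑ k, p k * a k) ^ 2 ≤ ∑ i, p i * a i ^ 2 := by
  set μ := ∑ k, p k * a k
  have : ∑ i, p i * (a i - μ) ^ 2 = ∑ i, p i * a i ^ 2 - μ ^ 2 := by
    have (i : ι) : p i * (a i - μ) ^ 2 = p i * a i ^ 2 - 2 * μ * (p i * a i) + μ ^ 2 * p i := by
      ring
    simp_rw [this, sum_add_distrib, sum_sub_distrib, ← mul_sum, hp₁]
    ring
  linarith [sq_nonneg μ]

lemma abs_sub_weighted_mean_le (hp : ∀ i, 0 ≤ p i) (hp₁ : ∑ i, p i = 1) {M : ℝ}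
    (ha : ∀ i, |a i| ≤ M) (i : ι) : |a i - ∑ k, p k * a k| ≤ 2 * M := by
  have hμ : |∑ k, p k * a k| ≤ M :=
    calc |∑ k, p k * a k| ≤ ∑ k, p k * |a k| := by
          simpa [abs_mul, abs_of_nonneg (hp _)] using abs_sum_le_sum_abs (fun k => p k * a k) univ
      _ ≤ ∑ k, p k * M := by gcongr with k; exacts [hp k, ha k]
      _ = M := by rw [← sum_mul, hp₁, one_mul]
  linarith [abs_sub _ _ |>.trans (add_le_add (ha i) hμ)]

end WeightedMean

lemma sum_card_sub_mul {ι : Type*} [Fintype ι] [DecidableEq ι] {N : ℕ} (z : Fin N → ι)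
    (p a : ι → ℝ) :
    ∑ i, ((#{j | z j = i} : ℝ) - N * p i) * a i = ∑ j, (a (z j) - ∑ i, p i * a i) := by
  have hcount : ∑ i, (#{j | z j = i} : ℝ) * a i = ∑ j, a (z j) := by
    simpa [sum_const, nsmul_eq_mul] using sum_fiberwise' univ z a
  calc _ = ∑ i, (#{j | z j = i} : ℝ) * a i - N * ∑ i, p i * a i := by
        simp only [sub_mul, sum_sub_distrib, mul_sum, mul_assoc]
    _ = _ := by rw [hcount, sum_sub_distrib, sum_const, card_univ, Fintype.card_fin, nsmul_eq_mul]

theorem multinomial_bernstein_general {m N : ℕ}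
    (p : Fin m → ℝ) (hp₀ : ∀ i, 0 < p i) (hsum : ∑ i, p i = 1)
    (a : Fin m → ℝ) (t : ℝ) (ht : 0 ≤ t) :
    (∑ z : Fin N → Fin m,
        if t ≤ |∑ i, (((Finset.univ.filter fun j => z j = i).card : ℝ) - N * p i) * a i|
        then ∏ j, p (z j) else 0)
      ≤ 2 * Real.exp (-3 * t ^ 2 /
          (6 * N * (∑ i, p i * a i ^ 2) + 4 * (⨆ i, |a i|) * t)) := by
  have hp : ∀ i, 0 ≤ p i := fun i => (hp₀ i).le
  have hM : ∀ i, |a i| ≤ ⨆ i, |a i| := le_ciSup (Set.finite_range _).bddAbove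
  have hexponent : -3 * t ^ 2 / (6 * N * (∑ i, p i * a i ^ 2) + 4 * (⨆ i, |a i|) * t)
      = -t ^ 2 / (2 * (N * ∑ i, p i * a i ^ 2 + 2 * (⨆ i, |a i|) * t / 3)) := by
    rw [← mul_div_mul_left (-t ^ 2) _ (three_ne_zero' ℝ)]
    ring_nf
  simp_rw [sum_card_sub_mul, hexponent]
  exact sum_ite_abs_le_two_mul_exp_bernstein hp hsum (sum_mul_sub_weighted_mean hsum)
    (abs_sub_weighted_mean_le hp hsum hM) (sum_mul_sub_weighted_mean_sq_le hsum) N ht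

theorem multinomial_bernstein {m N : ℕ} (hm : 1 ≤ m) (hN : 1 ≤ N)
    (p : Fin m → ℝ) (hp₀ : ∀ i, 0 < p i) (hp₁ : ∀ i, p i < 1) (hsum : ∑ i, p i = 1)
    (a : Fin m → ℝ) (t : ℝ) (ht : 0 ≤ t) :
    (∑ z : Fin N → Fin m,
        if t ≤ |∑ i, (((Finset.univ.filter fun j => z j = i).card : ℝ) - N * p i) * a i|
        then ∏ j, p (z j) else 0)
      ≤ 2 * Real.exp (-3 * t ^ 2 /
          (6 * N * (∑ i, p i * a i ^ 2) + 4 * (⨆ i, |a i|) * t)) :=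
  multinomial_bernstein_general p hp₀ hsum a t ht
end

section
/- Let n1, n2, N ≥ 1, let Y ∈ ℝ^{n1×n2} have nonnegative entries with Σ_{i,j} Y_{ij} = N, and let θ̂ be a maximizer of the function θ ↦ (1/N)⟨Y, θ⟩ − Σ_{i,j} e^{θ_{ij}} over the set {θ ∈ ℝ^{n1×n2} : D θ D̃ᵀ ≥ 0 entrywise}. Then Σ_{i,j} e^{θ̂_{ij}} = 1. Consequently, the maximizer of (1/N)⟨Y, θ⟩ over {θ : Σ_{i,j} e^{θ_{ij}} = 1, D θ D̃ᵀ ≥ 0} coincides with the maximizer of the penalized objective over {θ : D θ D̃ᵀ ≥ 0}. -/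
/-- A matrix `θ` is supermodular: all second mixed differences `(D θ D̃ᵀ)_{i,j}` are
nonnegative, i.e. `θ_{i,j} + θ_{i+1,j+1} − θ_{i+1,j} − θ_{i,j+1} ≥ 0`. -/
def Supermod {n₁ n₂ : ℕ} (θ : Fin n₁ → Fin n₂ → ℝ) : Prop :=
  ∀ (i j : ℕ) (h₁ : i + 1 < n₁) (h₂ : j + 1 < n₂),
    θ ⟨i + 1, h₁⟩ ⟨j, Nat.lt_of_succ_lt h₂⟩ + θ ⟨i, Nat.lt_of_succ_lt h₁⟩ ⟨j + 1, h₂⟩ ≤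
      θ ⟨i, Nat.lt_of_succ_lt h₁⟩ ⟨j, Nat.lt_of_succ_lt h₂⟩ + θ ⟨i + 1, h₁⟩ ⟨j + 1, h₂⟩

theorem mle_normalized {n₁ n₂ N : ℕ} (hn₁ : 1 ≤ n₁) (hn₂ : 1 ≤ n₂) (hN : 1 ≤ N)
    (Y : Fin n₁ → Fin n₂ → ℝ) (hY : ∀ i j, 0 ≤ Y i j)
    (hYsum : ∑ i, ∑ j, Y i j = (N : ℝ))
    (θh : Fin n₁ → Fin n₂ → ℝ) (hθh : Supermod θh)
    (hmax : ∀ θ, Supermod θ →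
      (1 / (N : ℝ)) * (∑ i, ∑ j, Y i j * θ i j) - ∑ i, ∑ j, Real.exp (θ i j) ≤
        (1 / (N : ℝ)) * (∑ i, ∑ j, Y i j * θh i j) - ∑ i, ∑ j, Real.exp (θh i j)) :
    (∑ i, ∑ j, Real.exp (θh i j)) = 1 ∧
    ∀ θ, Supermod θ → (∑ i, ∑ j, Real.exp (θ i j)) = 1 →
      (1 / (N : ℝ)) * (∑ i, ∑ j, Y i j * θ i j) ≤
        (1 / (N : ℝ)) * (∑ i, ∑ j, Y i j * θh i j) := by
  have hNpos : (0:ℝ) < N := by exact_mod_cast hN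
  have hNne : (N:ℝ) ≠ 0 := ne_of_gt hNpos
  set S := ∑ i, ∑ j, Real.exp (θh i j) with hSdef
  have hS0 : 0 < S := by
    apply Finset.sum_pos
    · intro i _
      apply Finset.sum_pos
      · intro j _; exact Real.exp_pos _
      · exact ⟨⟨0, hn₂⟩, Finset.mem_univ _⟩
    · exact ⟨⟨0, hn₁⟩, Finset.mem_univ _⟩
  have key : ∀ c : ℝ, c - Real.exp c * S ≤ -S := by
    intro c
    have hsup : Supermod (fun i j => θh i j + c) := by
      intro i j h₁ h₂
      have := hθh i j h₁ h₂
      simp only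
      linarith
    have h := hmax _ hsup
    have e1 : ∑ i, ∑ j, Y i j * (θh i j + c) =
        (∑ i, ∑ j, Y i j * θh i j) + (N:ℝ) * c := by
      simp only [mul_add, Finset.sum_add_distrib, ← Finset.sum_mul, hYsum]
    have e2 : ∑ i, ∑ j, Real.exp (θh i j + c) = Real.exp c * S := by
      rw [hSdef, Finset.mul_sum]
      congr 1; ext i
      rw [Finset.mul_sum]
      congr 1; ext j
      rw [Real.exp_add]; ring
    rw [e1, e2] at h
    have : (1 / (N:ℝ)) * ((∑ i, ∑ j, Y i j * θh i j) + (N:ℝ) * c) =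
        (1 / (N:ℝ)) * (∑ i, ∑ j, Y i j * θh i j) + c := by
      field_simp
    rw [this] at h
    linarith
  have hlog := key (-Real.log S)
  rw [Real.exp_neg, Real.exp_log hS0] at hlog
  have hinv : S⁻¹ * S = 1 := inv_mul_cancel₀ (ne_of_gt hS0)
  have hSle : S ≤ Real.log S + 1 := by
    rw [hinv] at hlog; linarith
  have hlogz : Real.log S = 0 := by
    by_contra hne
    have := Real.add_one_lt_exp hne
    rw [Real.exp_log hS0] at this
    linarith
  have hS1 : S = 1 := by
    have := Real.exp_log hS0
    rw [hlogz, Real.exp_zero] at this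
    exact this.symm
  refine ⟨hS1, ?_⟩
  intro θ hsup hnorm
  have h := hmax θ hsup
  rw [hnorm, hS1] at h
  linarith
end

section
/- Let p* be a PMF on the grid [n1] × [n2] and let Y be the count matrix of N i.i.d. observations from p*. Then the empirical frequency matrix Y/N satisfies E[ h²(p*, Y/N) ] ≤ n1 n2 / N, where h²(p, q) = Σ_{i,j} (√p_{ij} − √q_{ij})². -/
/-!
Sampling `N` i.i.d. points from `P` is modelled by summing over all samples `z : Fin N → α`
with weight `∏ k, P (z k)`; under these weights the coordinates are independent, so moments
of sums over the sample factor. For each cell `a` with `q = P a > 0`, the identity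
`(√q - √r)² (√q + √r)² = (q - r)²` and `(√q + √r)² ≥ q` bound the Hellinger term by
`(q - r)² / q`, and the empirical frequency `r` has variance `q (1 - q) / N`; so the cell
contributes at most `(1 - q) / N`. A cell with `q = 0` contributes the mean frequency, which is `0`.
Summing over the `n₁ n₂` cells gives the bound.
-/

open Finset

section IidSums

variable {ι α : Type*} [Fintype ι] [DecidableEq ι] [Fintype α] (P : α → ℝ)

theorem sum_prod_mul_prod_eq_pow (hP : ∑ a, P a = 1) (f : α → ℝ) (S : Finset ι) :
    ∑ z : ι → α, (∏ k, P (z k)) * ∏ k ∈ S, f (z k) = (∑ a, P a * f a) ^ #S := by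
  have hfactor : ∀ z : ι → α, (∏ k, P (z k)) * ∏ k ∈ S, f (z k)
      = ∏ k, P (z k) * (if k ∈ S then f (z k) else 1) := fun z => by
    rw [prod_mul_distrib, Fintype.prod_ite_mem]
  have hcoord : ∀ k, ∑ a, P a * (if k ∈ S then f a else 1)
      = if k ∈ S then ∑ a, P a * f a else 1 := fun k => by
    split_ifs <;> simp [hP]
  simp only [hfactor]
  rw [← Fintype.prod_sum fun k a => P a * (if k ∈ S then f a else 1)]
  simp only [hcoord, Fintype.prod_ite_mem, prod_const]

theorem sum_prod_mul_sum_apply (hP : ∑ a, P a = 1) (f : α → ℝ) :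
    ∑ z : ι → α, (∏ k, P (z k)) * ∑ k, f (z k) = Fintype.card ι * ∑ a, P a * f a := by
  have hk : ∀ k : ι, ∑ z : ι → α, (∏ k, P (z k)) * f (z k) = ∑ a, P a * f a := fun k => by
    simpa using sum_prod_mul_prod_eq_pow P hP f {k}
  simp_rw [mul_sum]
  rw [sum_comm]
  simp [hk, mul_sum]

theorem sum_prod_mul_sum_apply_sq_of_sum_mul_eq_zero (hP : ∑ a, P a = 1) (f : α → ℝ)
    (hf : ∑ a, P a * f a = 0) :
    ∑ z : ι → α, (∏ k, P (z k)) * (∑ k, f (z k)) ^ 2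
      = Fintype.card ι * ∑ a, P a * f a ^ 2 := by
  have hkl : ∀ k l : ι, ∑ z : ι → α, (∏ k, P (z k)) * (f (z k) * f (z l))
      = if k = l then ∑ a, P a * f a ^ 2 else 0 := fun k l => by
    split_ifs with h
    · subst h
      simp_rw [← sq]
      simpa using sum_prod_mul_prod_eq_pow P hP (fun a => f a ^ 2) {k}
    · have := sum_prod_mul_prod_eq_pow P hP f {k, l}
      simp only [prod_pair h] at this
      rwa [hf, zero_pow (by simp [h])] at this
  have hswap : ∑ z : ι → α, (∏ k, P (z k)) * (∑ k, f (z k)) ^ 2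
      = ∑ k, ∑ l, ∑ z : ι → α, (∏ k, P (z k)) * (f (z k) * f (z l)) := by
    simp_rw [sq, sum_mul_sum, mul_sum]
    rw [sum_comm]
    exact sum_congr rfl fun _ _ => sum_comm
  simp [hswap, hkl]

end IidSums

theorem mul_sq_sqrt_sub_sqrt_le {q r : ℝ} (hq : 0 ≤ q) (hr : 0 ≤ r) :
    q * (√q - √r) ^ 2 ≤ (q - r) ^ 2 := by
  have hfactor : q - r = (√q + √r) * (√q - √r) := by
    rw [← sq_sub_sq, Real.sq_sqrt hq, Real.sq_sqrt hr]
  have hq_le : q ≤ (√q + √r) ^ 2 := by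
    nlinarith [Real.sq_sqrt hq, Real.sqrt_nonneg q, Real.sqrt_nonneg r]
  rw [hfactor, mul_pow]
  exact mul_le_mul_of_nonneg_right hq_le (sq_nonneg _)

section EmpiricalFrequency

variable {ι α : Type*} [Fintype ι] [DecidableEq ι] [Fintype α] [DecidableEq α] {P : α → ℝ}

theorem sum_prod_mul_card_filter_eq (hP : ∑ a, P a = 1) (a : α) :
    ∑ z : ι → α, (∏ k, P (z k)) * (#{k | z k = a} : ℝ) = Fintype.card ι * P a := by
  have := sum_prod_mul_sum_apply (ι := ι) P hP fun x => if x = a then 1 else 0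
  simp only [mul_ite, mul_one, mul_zero, sum_ite_eq', mem_univ, if_true] at this
  simpa only [natCast_card_filter] using this

theorem sum_prod_mul_sq_sub_card_filter_div [Nonempty ι] (hP : ∑ a, P a = 1) (a : α) :
    ∑ z : ι → α, (∏ k, P (z k)) * (P a - #{k | z k = a} / Fintype.card ι) ^ 2
      = P a * (1 - P a) / Fintype.card ι := by
  set f : α → ℝ := fun x => (if x = a then 1 else 0) - P a
  have hcount : ∀ z : ι → α,
      (#{k | z k = a} : ℝ) - Fintype.card ι * P a = ∑ k, f (z k) := fun z => by
    simp only [f, natCast_card_filter, sum_sub_distrib, sum_const, card_univ, nsmul_eq_mul]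
  have hmean : ∑ x, P x * f x = 0 := by simp [f, mul_sub, sum_sub_distrib, ← sum_mul, hP]
  have hvar : ∑ x, P x * f x ^ 2 = P a * (1 - P a) := by
    have hpt : ∀ x, P x * f x ^ 2
        = (1 - 2 * P a) * (P x * if x = a then 1 else 0) + P a ^ 2 * P x := fun x => by
      simp only [f]
      split_ifs <;> ring
    simp only [hpt, sum_add_distrib, ← mul_sum, mul_ite, mul_one, mul_zero, sum_ite_eq', mem_univ,
      if_true, hP]
    ring
  have hN : (Fintype.card ι : ℝ) ≠ 0 := by positivity
  have hsq : ∀ z : ι → α, (P a - #{k | z k = a} / Fintype.card ι) ^ 2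
      = (∑ k, f (z k)) ^ 2 / (Fintype.card ι) ^ 2 := fun z => by
    rw [← hcount]; field_simp; ring
  simp_rw [hsq, mul_div_assoc', ← sum_div,
    sum_prod_mul_sum_apply_sq_of_sum_mul_eq_zero P hP f hmean, hvar]
  field_simp

theorem sum_prod_mul_sq_sqrt_sub_sqrt_card_filter_div_le [Nonempty ι] (hP0 : ∀ a, 0 ≤ P a)
    (hP : ∑ a, P a = 1) (a : α) :
    ∑ z : ι → α, (∏ k, P (z k)) * (√(P a) - √(#{k | z k = a} / Fintype.card ι)) ^ 2
      ≤ (1 - P a) / Fintype.card ι := by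
  have hfreq0 : ∀ z : ι → α, (0 : ℝ) ≤ #{k | z k = a} / Fintype.card ι := fun z => by positivity
  have hw0 : ∀ z : ι → α, 0 ≤ ∏ k, P (z k) := fun z => prod_nonneg fun k _ => hP0 _
  rcases (hP0 a).eq_or_lt with hPa | hPa
  · have hmean : ∑ z : ι → α, (∏ k, P (z k)) * (#{k | z k = a} / Fintype.card ι) = P a := by
      simp only [mul_div_assoc', ← sum_div, sum_prod_mul_card_filter_eq hP a]
      field_simp
    simp_rw [← hPa, Real.sqrt_zero, zero_sub, neg_sq, Real.sq_sqrt (hfreq0 _)]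
    rw [hmean, ← hPa]
    positivity
  · refine le_of_mul_le_mul_left ?_ hPa
    calc P a * ∑ z : ι → α, (∏ k, P (z k)) * (√(P a) - √(#{k | z k = a} / Fintype.card ι)) ^ 2
        = ∑ z : ι → α,
            (∏ k, P (z k)) * (P a * (√(P a) - √(#{k | z k = a} / Fintype.card ι)) ^ 2) := by
          rw [mul_sum]
          exact sum_congr rfl fun _ _ => by ring
      _ ≤ ∑ z : ι → α, (∏ k, P (z k)) * (P a - #{k | z k = a} / Fintype.card ι) ^ 2 :=
          sum_le_sum fun z _ => mul_le_mul_of_nonneg_left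
            (mul_sq_sqrt_sub_sqrt_le hPa.le (hfreq0 z)) (hw0 z)
      _ = P a * ((1 - P a) / Fintype.card ι) := by
          rw [sum_prod_mul_sq_sub_card_filter_div hP a, mul_div_assoc]

end EmpiricalFrequency

open scoped Classical

theorem empirical_hellinger_rate {n₁ n₂ N : ℕ} (hN : 0 < N)
    (p : Fin n₁ → Fin n₂ → ℝ) (hp : ∀ i j, 0 ≤ p i j) (hsum : ∑ i, ∑ j, p i j = 1) :
    ∑ z : Fin N → Fin n₁ × Fin n₂,
        (∏ k, p (z k).1 (z k).2) *
          ∑ i, ∑ j,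
            (Real.sqrt (p i j) -
              Real.sqrt (((Finset.univ.filter fun k => z k = (i, j)).card : ℝ) / N)) ^ 2
      ≤ (n₁ * n₂ : ℝ) / N := by
  have : Nonempty (Fin N) := Fin.pos_iff_nonempty.mp hN
  set P : Fin n₁ × Fin n₂ → ℝ := fun a => p a.1 a.2
  have hP0 : ∀ a, 0 ≤ P a := fun a => hp a.1 a.2
  have hP : ∑ a, P a = 1 := by rw [Fintype.sum_prod_type]; exact hsum
  calc _ = ∑ a, ∑ z : Fin N → Fin n₁ × Fin n₂,
        (∏ k, P (z k)) * (√(P a) - √(#{k | z k = a} / N)) ^ 2 := by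
        simp_rw [mul_sum]
        rw [sum_comm, Fintype.sum_prod_type]
        exact sum_congr rfl fun i _ => sum_comm
    _ ≤ ∑ _a : Fin n₁ × Fin n₂, (1 : ℝ) / N := sum_le_sum fun a _ => by
        have := sum_prod_mul_sq_sqrt_sub_sqrt_card_filter_div_le (ι := Fin N) hP0 hP a
        rw [Fintype.card_fin] at this
        exact this.trans (by gcongr; linarith [hP0 a])
    _ = (n₁ * n₂ : ℝ) / N := by
        rw [sum_const, card_univ, Fintype.card_prod, Fintype.card_fin, Fintype.card_fin,
          nsmul_eq_mul]
        push_cast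
        ring
end

section
/- Let p* be an entrywise positive PMF on [n1] × [n2] with θ* = log p* (entrywise), let Y ∈ ℝ^{n1×n2} have nonnegative entries, let N > 0, and set ε = Y/N − p*. Let K ⊆ ℝ^{n1×n2} be any set containing θ* such that |θ_{ij} − θ*_{ij}| ≤ 1.1 for all θ ∈ K and all (i,j), and let θ̃ be a maximizer over K of the function θ ↦ (1/N)⟨Y, θ⟩ − Σ_{i,j} e^{θ_{ij}}. Then (1/4) Σ_{i,j} p*_{ij} (θ̃_{ij} − θ*_{ij})² ≤ ⟨ε, θ̃ − θ*⟩. -/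
/-!
Write `Δ = θ̃ - θ*`. Optimality of `θ̃` against `θ*` gives
`∑ exp θ̃ - 1 ≤ ⟨Y, Δ⟩ / N`, since `∑ exp θ* = ∑ p* = 1`. On the other hand
`exp θ̃ = p* exp Δ` and `exp t ≥ (1 + t/2)² = 1 + t + t²/4` for `t ≥ -2`, so
`∑ exp θ̃ ≥ 1 + ⟨p*, Δ⟩ + ¼ ∑ p* Δ²`; the box constraint guarantees `Δ ≥ -1.1 ≥ -2`.
-/

open Finset Real

theorem Real.one_add_add_sq_div_four_le_exp {x : ℝ} (hx : -2 ≤ x) :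
    1 + x + x ^ 2 / 4 ≤ exp x :=
  calc 1 + x + x ^ 2 / 4 = (1 + x / 2) ^ 2 := by ring
    _ ≤ exp (x / 2) ^ 2 :=
        pow_le_pow_left₀ (by linarith) (by linarith [add_one_le_exp (x / 2)]) 2
    _ = exp x := by rw [sq, ← exp_add, add_halves]

theorem mul_one_add_add_sq_div_four_le_exp {p θ : ℝ} (hp : 0 < p) (hθ : -2 ≤ θ - log p) :
    p * (1 + (θ - log p) + (θ - log p) ^ 2 / 4) ≤ exp θ := by
  have h_exp : exp θ = p * exp (θ - log p) := by rw [exp_sub, exp_log hp]; field_simp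
  rw [h_exp]
  exact mul_le_mul_of_nonneg_left (one_add_add_sq_div_four_le_exp hθ) hp.le

section BasicInequality

variable {ι : Type*} [Fintype ι] {p : ι → ℝ}

theorem one_add_sum_mul_add_sum_mul_sq_div_four_le_sum_exp (hp : ∀ i, 0 < p i)
    (hp_sum : ∑ i, p i = 1) {θ : ι → ℝ} (hθ : ∀ i, -2 ≤ θ i - log (p i)) :
    1 + ∑ i, p i * (θ i - log (p i)) + (1 / 4) * ∑ i, p i * (θ i - log (p i)) ^ 2 ≤
      ∑ i, exp (θ i) := by
  calc 1 + ∑ i, p i * (θ i - log (p i)) + (1 / 4) * ∑ i, p i * (θ i - log (p i)) ^ 2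
      = ∑ i, p i + ∑ i, p i * (θ i - log (p i)) +
          (1 / 4) * ∑ i, p i * (θ i - log (p i)) ^ 2 := by rw [hp_sum]
    _ = ∑ i, p i * (1 + (θ i - log (p i)) + (θ i - log (p i)) ^ 2 / 4) := by
        rw [mul_sum, ← sum_add_distrib, ← sum_add_distrib]
        exact sum_congr rfl fun i _ => by ring
    _ ≤ ∑ i, exp (θ i) :=
        sum_le_sum fun i _ => mul_one_add_add_sq_div_four_le_exp (hp i) (hθ i)

theorem quadratic_basic_inequality_of_le (hp : ∀ i, 0 < p i) (hp_sum : ∑ i, p i = 1)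
    (Y : ι → ℝ) (N : ℝ) {θ : ι → ℝ} (hθ : ∀ i, -2 ≤ θ i - log (p i))
    (hle : (1 / N) * (∑ i, Y i * log (p i)) - ∑ i, exp (log (p i)) ≤
      (1 / N) * (∑ i, Y i * θ i) - ∑ i, exp (θ i)) :
    (1 / 4) * ∑ i, p i * (θ i - log (p i)) ^ 2 ≤
      ∑ i, (Y i / N - p i) * (θ i - log (p i)) := by
  have h_exp_log : ∑ i, exp (log (p i)) = 1 := by
    rw [← hp_sum]; exact sum_congr rfl fun i _ => exp_log (hp i)
  have h_rhs : ∑ i, (Y i / N - p i) * (θ i - log (p i)) =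
      (1 / N) * (∑ i, Y i * θ i) - (1 / N) * (∑ i, Y i * log (p i)) -
        ∑ i, p i * (θ i - log (p i)) := by
    simp only [mul_sum, ← sum_sub_distrib]
    refine sum_congr rfl fun i _ => ?_
    ring
  rw [h_rhs]
  linarith [one_add_sum_mul_add_sum_mul_sq_div_four_le_sum_exp hp hp_sum hθ]

end BasicInequality

theorem quadratic_basic_inequality_general {n₁ n₂ : ℕ}
    (p : Fin n₁ → Fin n₂ → ℝ) (hp_pos : ∀ i j, 0 < p i j)
    (hp_sum : ∑ i, ∑ j, p i j = 1)
    (Y : Fin n₁ → Fin n₂ → ℝ)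
    (N : ℝ)
    (K : Set (Fin n₁ → Fin n₂ → ℝ))
    (hmem : (fun i j => Real.log (p i j)) ∈ K)
    (hbox : ∀ θ ∈ K, ∀ i j, |θ i j - Real.log (p i j)| ≤ 1.1)
    (θt : Fin n₁ → Fin n₂ → ℝ) (hθt : θt ∈ K)
    (hmax : ∀ θ ∈ K,
      (1 / N) * (∑ i, ∑ j, Y i j * θ i j) - ∑ i, ∑ j, Real.exp (θ i j) ≤
        (1 / N) * (∑ i, ∑ j, Y i j * θt i j) - ∑ i, ∑ j, Real.exp (θt i j)) :
    (1 / 4) * ∑ i, ∑ j, p i j * (θt i j - Real.log (p i j)) ^ 2 ≤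
      ∑ i, ∑ j, (Y i j / N - p i j) * (θt i j - Real.log (p i j)) := by
  have hle := hmax _ hmem
  have hθ : ∀ x : Fin n₁ × Fin n₂, -2 ≤ θt x.1 x.2 - log (p x.1 x.2) := fun x => by
    linarith [(abs_le.mp (hbox θt hθt x.1 x.2)).1]
  simp only [← Fintype.sum_prod_type'] at hp_sum hle ⊢
  exact quadratic_basic_inequality_of_le (fun x : Fin n₁ × Fin n₂ => hp_pos x.1 x.2) hp_sum
    (fun x => Y x.1 x.2) N hθ hle

theorem quadratic_basic_inequality {n₁ n₂ : ℕ}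
    (p : Fin n₁ → Fin n₂ → ℝ) (hp_pos : ∀ i j, 0 < p i j)
    (hp_sum : ∑ i, ∑ j, p i j = 1)
    (Y : Fin n₁ → Fin n₂ → ℝ) (hY : ∀ i j, 0 ≤ Y i j)
    (N : ℝ) (hN : 0 < N)
    (K : Set (Fin n₁ → Fin n₂ → ℝ))
    (hmem : (fun i j => Real.log (p i j)) ∈ K)
    (hbox : ∀ θ ∈ K, ∀ i j, |θ i j - Real.log (p i j)| ≤ 1.1)
    (θt : Fin n₁ → Fin n₂ → ℝ) (hθt : θt ∈ K)
    (hmax : ∀ θ ∈ K,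
      (1 / N) * (∑ i, ∑ j, Y i j * θ i j) - ∑ i, ∑ j, Real.exp (θ i j) ≤
        (1 / N) * (∑ i, ∑ j, Y i j * θt i j) - ∑ i, ∑ j, Real.exp (θt i j)) :
    (1 / 4) * ∑ i, ∑ j, p i j * (θt i j - Real.log (p i j)) ^ 2 ≤
      ∑ i, ∑ j, (Y i j / N - p i j) * (θt i j - Real.log (p i j)) :=
  quadratic_basic_inequality_general p hp_pos hp_sum Y N K hmem hbox θt hθt hmax
end

section
/- Let p* be an entrywise positive PMF on [n1] × [n2] with θ* = log p* (entrywise), and let θ̃ ∈ ℝ^{n1×n2} satisfy |θ̃_{ij} − θ*_{ij}| ≤ 1.1 for all (i,j). Define the normalized log-PMF θ̂_{ij} = θ̃_{ij} − log Σ_{r,s} e^{θ̃_{rs}} and p̂_{ij} = e^{θ̂_{ij}}. Then KL(p*, p̂) ≤ ⟨p*, θ* − θ̃⟩ + Σ_{i,j} e^{θ̃_{ij}} − 1 ≤ 2 Σ_{i,j} p*_{ij} (θ̃_{ij} − θ*_{ij})². -/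
lemma exp_quad_aux (x : ℝ) (hx : |x| ≤ 1.1) : Real.exp x ≤ 1 + x + 2 * x ^ 2 := by
  obtain ⟨h1, h2⟩ := abs_le.mp hx
  have hlt : x / 3 < 1 := by linarith
  have hkey : Real.exp (x / 3) * (1 - x / 3) ≤ 1 := by
    have h3 : 1 - x / 3 ≤ Real.exp (-(x / 3)) := by
      have := Real.add_one_le_exp (-(x / 3)); linarith
    calc Real.exp (x / 3) * (1 - x / 3)
        ≤ Real.exp (x / 3) * Real.exp (-(x / 3)) :=
          mul_le_mul_of_nonneg_left h3 (Real.exp_pos _).le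
      _ = 1 := by rw [← Real.exp_add]; simp
  have hxp : Real.exp x = (Real.exp (x / 3)) ^ 3 := by
    rw [← Real.exp_nat_mul]; norm_num; ring_nf
  have hpos : (0:ℝ) < 1 - x / 3 := by linarith
  have hcube : Real.exp x * (1 - x / 3) ^ 3 ≤ 1 := by
    rw [hxp]
    calc Real.exp (x / 3) ^ 3 * (1 - x / 3) ^ 3
        = (Real.exp (x / 3) * (1 - x / 3)) ^ 3 := by ring
      _ ≤ 1 ^ 3 := by
          apply pow_le_pow_left₀ _ hkey
          positivity
      _ = 1 := one_pow 3
  have hexppos := Real.exp_pos x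
  nlinarith [sq_nonneg x, sq_nonneg (x - 1), sq_nonneg (x + 1), mul_pos hexppos hpos,
    sq_nonneg ((1 - x/3) * x), mul_nonneg (sq_nonneg x) hpos.le]

theorem kl_quadratic_bound {n₁ n₂ : ℕ}
    (p : Fin n₁ → Fin n₂ → ℝ) (hp_pos : ∀ i j, 0 < p i j)
    (hp_sum : ∑ i, ∑ j, p i j = 1)
    (θt : Fin n₁ → Fin n₂ → ℝ)
    (hbox : ∀ i j, |θt i j - Real.log (p i j)| ≤ 1.1) :
    (∑ i, ∑ j, p i j * Real.log (p i j /
        Real.exp (θt i j - Real.log (∑ r, ∑ s, Real.exp (θt r s)))))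
      ≤ (∑ i, ∑ j, p i j * (Real.log (p i j) - θt i j))
          + (∑ i, ∑ j, Real.exp (θt i j)) - 1 ∧
    (∑ i, ∑ j, p i j * (Real.log (p i j) - θt i j))
        + (∑ i, ∑ j, Real.exp (θt i j)) - 1
      ≤ 2 * ∑ i, ∑ j, p i j * (θt i j - Real.log (p i j)) ^ 2 := by
  have hn₁ : 0 < n₁ := by
    rcases Nat.eq_zero_or_pos n₁ with h | h
    · subst h; simp at hp_sum
    · exact h
  have hn₂ : 0 < n₂ := by
    rcases Nat.eq_zero_or_pos n₂ with h | h
    · subst h; simp at hp_sum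
    · exact h
  haveI : Nonempty (Fin n₁) := Fin.pos_iff_nonempty.mp hn₁
  haveI : Nonempty (Fin n₂) := Fin.pos_iff_nonempty.mp hn₂
  set Z : ℝ := ∑ r, ∑ s, Real.exp (θt r s) with hZ
  have hZpos : 0 < Z :=
    Finset.sum_pos (fun i _ => Finset.sum_pos (fun j _ => Real.exp_pos _)
      Finset.univ_nonempty) Finset.univ_nonempty
  constructor
  · -- first inequality
    have hterm : ∀ i j, p i j * Real.log (p i j / Real.exp (θt i j - Real.log Z))
        = p i j * (Real.log (p i j) - θt i j) + p i j * Real.log Z := by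
      intro i j
      rw [Real.log_div (hp_pos i j).ne' (Real.exp_pos _).ne', Real.log_exp]
      ring
    have hLHS : (∑ i, ∑ j, p i j * Real.log (p i j / Real.exp (θt i j - Real.log Z)))
        = (∑ i, ∑ j, p i j * (Real.log (p i j) - θt i j)) + Real.log Z := by
      simp only [hterm, Finset.sum_add_distrib]
      congr 1
      simp only [← Finset.sum_mul]
      rw [hp_sum, one_mul]
    rw [hLHS]
    have := Real.log_le_sub_one_of_pos hZpos
    linarith
  · -- second inequality
    have key : ∀ i j, Real.exp (θt i j) - p i j + p i j * (Real.log (p i j) - θt i j)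
        ≤ 2 * (p i j * (θt i j - Real.log (p i j)) ^ 2) := by
      intro i j
      have hd := exp_quad_aux (θt i j - Real.log (p i j)) (hbox i j)
      have hex : Real.exp (θt i j)
          = p i j * Real.exp (θt i j - Real.log (p i j)) := by
        rw [Real.exp_sub, Real.exp_log (hp_pos i j),
          mul_div_cancel₀ _ (hp_pos i j).ne']
      rw [hex]
      nlinarith [hp_pos i j, hd]
    have hsum : ∑ i, ∑ j, (Real.exp (θt i j) - p i j
          + p i j * (Real.log (p i j) - θt i j))
        ≤ ∑ i, ∑ j, 2 * (p i j * (θt i j - Real.log (p i j)) ^ 2) :=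
      Finset.sum_le_sum fun i _ => Finset.sum_le_sum fun j _ => key i j
    have e1 : ∑ i, ∑ j, (Real.exp (θt i j) - p i j
          + p i j * (Real.log (p i j) - θt i j))
        = (∑ i, ∑ j, Real.exp (θt i j)) - 1
          + (∑ i, ∑ j, p i j * (Real.log (p i j) - θt i j)) := by
      rw [← hp_sum]
      simp [Finset.sum_add_distrib, Finset.sum_sub_distrib]
    have e2 : ∑ i, ∑ j, 2 * (p i j * (θt i j - Real.log (p i j)) ^ 2)
        = 2 * ∑ i, ∑ j, p i j * (θt i j - Real.log (p i j)) ^ 2 := by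
      rw [Finset.mul_sum]; congr 1; ext i; rw [Finset.mul_sum]
    rw [e1, e2] at hsum
    linarith
end

section
/- Let p and q be entrywise positive PMFs on a finite set of size m such that 1/(5m) ≤ p_x ≤ 5/m for all x and |log p_x − log q_x| ≤ 1/2 for all x. Then (1/(40 m)) Σ_x (log p_x − log q_x)² ≤ h²(p, q) ≤ (5/(2m)) Σ_x (log p_x − log q_x)², where h²(p, q) = Σ_x (√p_x − √q_x)². -/
lemma exp_sub_one_sq_bounds {s : ℝ} (hs : |s| ≤ 1/4) :
    s^2/2 ≤ (Real.exp s - 1)^2 ∧ (Real.exp s - 1)^2 ≤ 2 * s^2 := by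
  have hE := Real.exp_pos s
  have h1 : 1 + s ≤ Real.exp s := by linarith [Real.add_one_le_exp s]
  have hm : Real.exp (-s) * Real.exp s = 1 := by rw [← Real.exp_add]; simp
  have h2 : (1 - s) * Real.exp s ≤ 1 := by
    have := Real.add_one_le_exp (-s)
    nlinarith
  have habs := abs_le.mp hs
  have hEsq : Real.exp s ^ 2 = Real.exp (2*s) := by rw [sq, ← Real.exp_add]; ring_nf
  have e2 : Real.exp (1/2) < 2 := by
    have h : Real.exp (1/2) ^ 2 = Real.exp 1 := by rw [sq, ← Real.exp_add]; norm_num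
    nlinarith [Real.exp_one_lt_d9, Real.exp_pos (1/2)]
  have hub : Real.exp s ^ 2 ≤ 2 := by
    rw [hEsq]
    calc Real.exp (2*s) ≤ Real.exp (1/2) := Real.exp_le_exp.mpr (by linarith)
      _ ≤ 2 := le_of_lt e2
  have hlb : 1/2 ≤ Real.exp s ^ 2 := by
    rw [hEsq]
    have h1 : Real.exp (-(1/2)) ≤ Real.exp (2*s) := Real.exp_le_exp.mpr (by linarith)
    have h2 : Real.exp (-(1/2)) * Real.exp (1/2) = 1 := by rw [← Real.exp_add]; norm_num
    nlinarith [Real.exp_pos (-(1/2))]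
  rcases le_or_gt 0 s with h | h
  · constructor
    · nlinarith
    · -- 0 ≤ E - 1 ≤ s*E, so (E-1)^2 ≤ s^2 E^2 ≤ 2 s^2
      have hE1 : (0:ℝ) ≤ Real.exp s - 1 := by nlinarith
      have hsE : Real.exp s - 1 ≤ s * Real.exp s := by nlinarith
      nlinarith [sq_nonneg s, mul_le_mul hsE hsE hE1 (by positivity : (0:ℝ) ≤ s * Real.exp s)]
  · constructor
    · -- 0 ≤ 1 - E, and 1 - E ≥ -s*E, so (E-1)^2 ≥ s^2 E^2 ≥ s^2/2
      have hE1 : (0:ℝ) ≤ 1 - Real.exp s := by nlinarith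
      have hsE : -s * Real.exp s ≤ 1 - Real.exp s := by nlinarith
      have hns : (0:ℝ) ≤ -s * Real.exp s := by nlinarith
      nlinarith [mul_le_mul hsE hsE hns (by linarith)]
    · nlinarith

theorem hellinger_log_comparison (m : ℕ) (hm : 1 ≤ m) (p q : Fin m → ℝ)
    (hp_pos : ∀ x, 0 < p x) (hq_pos : ∀ x, 0 < q x)
    (hp_sum : ∑ x, p x = 1) (hq_sum : ∑ x, q x = 1)
    (hp_lb : ∀ x, 1 / (5 * (m : ℝ)) ≤ p x) (hp_ub : ∀ x, p x ≤ 5 / (m : ℝ))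
    (hlog : ∀ x, |Real.log (p x) - Real.log (q x)| ≤ 1 / 2) :
    (1 / (40 * (m : ℝ))) * ∑ x, (Real.log (p x) - Real.log (q x)) ^ 2
        ≤ ∑ x, (Real.sqrt (p x) - Real.sqrt (q x)) ^ 2 ∧
    ∑ x, (Real.sqrt (p x) - Real.sqrt (q x)) ^ 2
        ≤ (5 / (2 * (m : ℝ))) * ∑ x, (Real.log (p x) - Real.log (q x)) ^ 2 := by
  have hmR : (1:ℝ) ≤ (m:ℝ) := by exact_mod_cast hm
  have hmpos : (0:ℝ) < (m:ℝ) := by linarith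
  have key : ∀ x, (1 / (40 * (m : ℝ))) * (Real.log (p x) - Real.log (q x)) ^ 2
      ≤ (Real.sqrt (p x) - Real.sqrt (q x)) ^ 2 ∧
      (Real.sqrt (p x) - Real.sqrt (q x)) ^ 2
      ≤ (5 / (2 * (m : ℝ))) * (Real.log (p x) - Real.log (q x)) ^ 2 := by
    intro x
    set s : ℝ := (Real.log (q x) - Real.log (p x)) / 2 with hs_def
    have hs : |s| ≤ 1/4 := by
      have h := abs_le.mp (hlog x)
      rw [abs_le]
      constructor <;> (simp only [hs_def]; linarith [h.1, h.2])
    have hq_eq : q x = p x * Real.exp (2 * s) := by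
      have h1 : Real.exp (Real.log (q x)) = q x := Real.exp_log (hq_pos x)
      have h2 : Real.exp (Real.log (p x)) = p x := Real.exp_log (hp_pos x)
      have : Real.log (q x) = Real.log (p x) + 2 * s := by simp [hs_def]; ring
      rw [← h1, this, Real.exp_add, h2]
    have hsqrt : Real.sqrt (q x) = Real.sqrt (p x) * Real.exp s := by
      rw [hq_eq]
      rw [Real.sqrt_mul (le_of_lt (hp_pos x))]
      congr 1
      rw [show (2:ℝ) * s = s + s by ring, Real.exp_add, ← sq]
      exact Real.sqrt_sq (le_of_lt (Real.exp_pos s))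
    have hterm : (Real.sqrt (p x) - Real.sqrt (q x)) ^ 2 = p x * (Real.exp s - 1)^2 := by
      rw [hsqrt]
      have : (Real.sqrt (p x) - Real.sqrt (p x) * Real.exp s)^2
          = Real.sqrt (p x) ^ 2 * (Real.exp s - 1)^2 := by ring
      rw [this, Real.sq_sqrt (le_of_lt (hp_pos x))]
    have hlogsq : (Real.log (p x) - Real.log (q x)) ^ 2 = 4 * s^2 := by
      simp only [hs_def]; ring
    obtain ⟨hlo, hhi⟩ := exp_sub_one_sq_bounds hs
    have hplb := hp_lb x
    have hpub := hp_ub x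
    constructor
    · rw [hterm, hlogsq]
      have h1 : (1 / (40 * (m : ℝ))) * (4 * s^2) = (1/(5*(m:ℝ))) * (s^2/2) := by
        field_simp; ring
      rw [h1]
      have : (0:ℝ) ≤ s^2/2 := by positivity
      calc (1/(5*(m:ℝ))) * (s^2/2) ≤ p x * (s^2/2) := by
            apply mul_le_mul_of_nonneg_right hplb this
        _ ≤ p x * (Real.exp s - 1)^2 :=
            mul_le_mul_of_nonneg_left hlo (le_of_lt (hp_pos x))
    · rw [hterm, hlogsq]
      have h1 : (5 / (2 * (m : ℝ))) * (4 * s^2) = (5/(m:ℝ)) * (2 * s^2) := by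
        field_simp; ring
      rw [h1]
      calc p x * (Real.exp s - 1)^2 ≤ p x * (2 * s^2) :=
            mul_le_mul_of_nonneg_left hhi (le_of_lt (hp_pos x))
        _ ≤ (5/(m:ℝ)) * (2 * s^2) := by
            apply mul_le_mul_of_nonneg_right hpub (by positivity)
  constructor
  · rw [Finset.mul_sum]
    exact Finset.sum_le_sum (fun x _ => (key x).1)
  · rw [Finset.mul_sum]
    exact Finset.sum_le_sum (fun x _ => (key x).2)
end

section
/- Let 0 < β̃ ≤ 1, R > 0, c_min > 0, and let ρ be a continuous probability density on [0,1]² satisfying ρ(x) ≥ c_min for all x ∈ [0,1]² and |ρ(x) − ρ(y)| ≤ R ‖x − y‖₂^{β̃} for all x, y ∈ [0,1]². For an integer n ≥ 1, let ρ̄ be the piecewise constant density defined on each grid cell S_{ij} = [(i−1)/n, i/n) × [(j−1)/n, j/n) by ρ̄(x) = n² ∫_{S_{ij}} ρ(y) dy for x ∈ S_{ij}. Then h²(ρ̄, ρ) = ∫_{[0,1]²} (√ρ̄(x) − √ρ(x))² dx ≤ 2 R² n^{−2β̃} / c_min. -/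
open MeasureTheory

noncomputable section

/-- The grid cell `S_{ij}` of the equidistant `n × n` grid on `[0,1]²` containing `x`. -/
def cellOf (n : ℕ) (x : ℝ × ℝ) : Set (ℝ × ℝ) :=
  Set.Ico ((⌊x.1 * n⌋ : ℝ) / n) (((⌊x.1 * n⌋ : ℝ) + 1) / n) ×ˢ
    Set.Ico ((⌊x.2 * n⌋ : ℝ) / n) (((⌊x.2 * n⌋ : ℝ) + 1) / n)


/-!
For `x` in the half-open square `[0,1)²` the cell of `x` lies in `[0,1]²` and has diameter `√2/n`,
so by the Hölder bound `ρ` stays within `C = R (√2/n)^β̃` of `ρ x` on it, and so does its mean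
`ρ̄ x = gridMean n ρ x`, which is also `≥ c_min`. Since `(√a - √b)² (√a + √b)² = (a - b)²` and
`(√a + √b)² ≥ c_min`, the integrand is at most `C² / c_min ≤ 2 R² n^{-2β̃} / c_min` off the null
top and right edges, and `[0,1]²` has area one.
-/

open scoped ENNReal

lemma Real.sq_sqrt_sub_sqrt_le {a b c : ℝ} (hc : 0 < c) (ha : c ≤ a) (hb : c ≤ b) :
    (√a - √b) ^ 2 ≤ (a - b) ^ 2 / c := by
  have hsa : √a ^ 2 = a := Real.sq_sqrt (hc.le.trans ha)
  have hsb : √b ^ 2 = b := Real.sq_sqrt (hc.le.trans hb)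
  have hc_le : c ≤ (√a + √b) ^ 2 := by nlinarith [Real.sqrt_nonneg a, Real.sqrt_nonneg b]
  rw [le_div_iff₀ hc]
  calc (√a - √b) ^ 2 * c ≤ (√a - √b) ^ 2 * (√a + √b) ^ 2 := by gcongr
    _ = (√a ^ 2 - √b ^ 2) ^ 2 := by ring
    _ = (a - b) ^ 2 := by rw [hsa, hsb]

lemma sq_rpow_sqrt_two_div_le {β r : ℝ} (hβ₁ : β ≤ 1) (hr : 0 < r) :
    ((√2 / r) ^ β) ^ 2 ≤ 2 * r ^ (-(2 * β)) := by
  have h2 : (2 : ℝ) ^ β ≤ 2 := by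
    simpa using Real.rpow_le_rpow_of_exponent_le (by norm_num : (1 : ℝ) ≤ 2) hβ₁
  calc ((√2 / r) ^ β) ^ 2 = ((√2 / r) ^ 2) ^ β := by
        rw [← Real.rpow_natCast, ← Real.rpow_natCast, ← Real.rpow_mul (by positivity),
          ← Real.rpow_mul (by positivity), mul_comm]
    _ = 2 ^ β * r ^ (-(2 * β)) := by
        rw [div_pow, Real.sq_sqrt zero_le_two, Real.div_rpow zero_le_two (by positivity),
          Real.rpow_neg hr.le, ← Real.rpow_natCast, ← Real.rpow_mul hr.le, div_eq_mul_inv]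
        norm_num
    _ ≤ 2 * r ^ (-(2 * β)) := by gcongr

lemma mem_Ico_floor_mul_div {r : ℝ} (hr : 0 < r) (t : ℝ) :
    t ∈ Set.Ico ((⌊t * r⌋ : ℝ) / r) (((⌊t * r⌋ : ℝ) + 1) / r) :=
  ⟨(div_le_iff₀ hr).2 (Int.floor_le _), (lt_div_iff₀ hr).2 (Int.lt_floor_add_one _)⟩

lemma Ico_floor_mul_div_subset_Icc {n : ℕ} (hn : 0 < n) {t : ℝ} (ht : t ∈ Set.Ico (0 : ℝ) 1) :
    Set.Ico ((⌊t * n⌋ : ℝ) / n) (((⌊t * n⌋ : ℝ) + 1) / n) ⊆ Set.Icc 0 1 := by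
  have hn' : (0 : ℝ) < n := by exact_mod_cast hn
  have h0 : (0 : ℤ) ≤ ⌊t * n⌋ := Int.floor_nonneg.2 (mul_nonneg ht.1 hn'.le)
  have h1 : ⌊t * n⌋ < (n : ℤ) := by
    rw [Int.floor_lt]
    push_cast
    nlinarith [ht.2]
  have h1' : (⌊t * n⌋ : ℝ) + 1 ≤ n := by exact_mod_cast h1
  refine Set.Ico_subset_Icc_self.trans (Set.Icc_subset_Icc ?_ ?_)
  · exact div_nonneg (by exact_mod_cast h0) hn'.le
  · rwa [div_le_one hn']

lemma mem_cellOf {n : ℕ} (hn : 0 < n) (x : ℝ × ℝ) : x ∈ cellOf n x :=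
  ⟨mem_Ico_floor_mul_div (by exact_mod_cast hn) x.1,
    mem_Ico_floor_mul_div (by exact_mod_cast hn) x.2⟩

lemma cellOf_subset_unitSq {n : ℕ} (hn : 0 < n) {x : ℝ × ℝ}
    (hx : x ∈ Set.Ico (0 : ℝ) 1 ×ˢ Set.Ico (0 : ℝ) 1) : cellOf n x ⊆ unitSq :=
  Set.prod_mono (Ico_floor_mul_div_subset_Icc hn hx.1) (Ico_floor_mul_div_subset_Icc hn hx.2)

lemma volume_cellOf (n : ℕ) (x : ℝ × ℝ) : volume (cellOf n x) = ENNReal.ofReal (1 / n ^ 2) := by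
  have hlen : ∀ a : ℝ, (a + 1) / n - a / n = 1 / n := fun a => by field_simp; ring
  rw [cellOf, Measure.volume_eq_prod, Measure.prod_prod, Real.volume_Ico, Real.volume_Ico, hlen,
    hlen, ← ENNReal.ofReal_mul (by positivity), one_div_mul_one_div, sq]

lemma sqrt_sub_sq_add_sub_sq_le_of_mem_cellOf {n : ℕ} (hn : 0 < n) {x y : ℝ × ℝ}
    (hy : y ∈ cellOf n x) : √((x.1 - y.1) ^ 2 + (x.2 - y.2) ^ 2) ≤ √2 / n := by
  have hn' : (0 : ℝ) < n := by exact_mod_cast hn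
  have hx := mem_cellOf hn x
  have hside : ∀ a b c : ℝ, a ∈ Set.Ico (c / n) ((c + 1) / n) →
      b ∈ Set.Ico (c / n) ((c + 1) / n) → (a - b) ^ 2 ≤ (1 / n) ^ 2 := fun a b c ha hb => by
    have := abs_sub_le_of_le_of_le ha.1 ha.2.le hb.1 hb.2.le
    rw [← sq_abs]
    gcongr
    convert this using 1
    field_simp
    ring
  calc √((x.1 - y.1) ^ 2 + (x.2 - y.2) ^ 2) ≤ √(2 * (1 / n) ^ 2) := by
        gcongr
        linarith [hside _ _ _ hx.1 hy.1, hside _ _ _ hx.2 hy.2]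
    _ = √2 / n := by rw [Real.sqrt_mul zero_le_two, Real.sqrt_sq (by positivity), mul_one_div]

def gridMean (n : ℕ) (ρ : ℝ × ℝ → ℝ) (x : ℝ × ℝ) : ℝ :=
  (n : ℝ) ^ 2 * ∫ y in cellOf n x, ρ y

lemma gridMean_eq_setAverage (n : ℕ) (ρ : ℝ × ℝ → ℝ) (x : ℝ × ℝ) :
    gridMean n ρ x = ⨍ y in cellOf n x, ρ y := by
  rw [gridMean, setAverage_eq, measureReal_def, volume_cellOf,
    ENNReal.toReal_ofReal (by positivity), smul_eq_mul, one_div, inv_inv]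

lemma gridMean_mem {n : ℕ} (hn : 0 < n) {ρ : ℝ × ℝ → ℝ}
    (hcont : ContinuousOn ρ unitSq) {x : ℝ × ℝ}
    (hx : x ∈ Set.Ico (0 : ℝ) 1 ×ˢ Set.Ico (0 : ℝ) 1) {I : Set ℝ} (hI : Convex ℝ I)
    (hIc : IsClosed I) (hρI : ∀ y ∈ cellOf n x, ρ y ∈ I) : gridMean n ρ x ∈ I := by
  have hvol := volume_cellOf n x
  have hn' : (0 : ℝ) < n := by exact_mod_cast hn
  rw [gridMean_eq_setAverage]
  refine hI.set_average_mem hIc (by simp [hvol, hn']) (by simp [hvol])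
    (ae_restrict_of_forall_mem (measurableSet_Ico.prod measurableSet_Ico) hρI) ?_
  exact (hcont.integrableOn_compact (isCompact_Icc.prod isCompact_Icc)).mono_set
    (cellOf_subset_unitSq hn hx)

lemma abs_sub_le_of_mem_cellOf {β R : ℝ} (hβ₀ : 0 ≤ β) (hR : 0 ≤ R) {ρ : ℝ × ℝ → ℝ}
    (hhold : ∀ z ∈ unitSq, ∀ w ∈ unitSq,
      |ρ z - ρ w| ≤ R * √((z.1 - w.1) ^ 2 + (z.2 - w.2) ^ 2) ^ β)
    {n : ℕ} (hn : 0 < n) {x y : ℝ × ℝ} (hx : x ∈ Set.Ico (0 : ℝ) 1 ×ˢ Set.Ico (0 : ℝ) 1)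
    (hy : y ∈ cellOf n x) : |ρ x - ρ y| ≤ R * (√2 / n) ^ β := by
  have hsub := cellOf_subset_unitSq hn hx
  refine (hhold x (hsub (mem_cellOf hn x)) y (hsub hy)).trans ?_
  gcongr
  exact sqrt_sub_sq_add_sub_sq_le_of_mem_cellOf hn hy

lemma sq_sqrt_gridMean_sub_sqrt_le {β R cmin : ℝ} (hβ₀ : 0 ≤ β) (hβ₁ : β ≤ 1)
    (hR : 0 ≤ R) (hcmin : 0 < cmin) {ρ : ℝ × ℝ → ℝ} (hcont : ContinuousOn ρ unitSq)
    (hlb : ∀ z ∈ unitSq, cmin ≤ ρ z)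
    (hhold : ∀ z ∈ unitSq, ∀ w ∈ unitSq,
      |ρ z - ρ w| ≤ R * √((z.1 - w.1) ^ 2 + (z.2 - w.2) ^ 2) ^ β)
    {n : ℕ} (hn : 0 < n) {x : ℝ × ℝ} (hx : x ∈ Set.Ico (0 : ℝ) 1 ×ˢ Set.Ico (0 : ℝ) 1) :
    (√(gridMean n ρ x) - √(ρ x)) ^ 2 ≤ 2 * R ^ 2 * (n : ℝ) ^ (-(2 * β)) / cmin := by
  have hn' : (0 : ℝ) < n := by exact_mod_cast hn
  have hsub := cellOf_subset_unitSq hn hx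
  have hxU : x ∈ unitSq := hsub (mem_cellOf hn x)
  set C := R * (√2 / n) ^ β
  have hwindow : gridMean n ρ x ∈ Set.Icc (ρ x - C) (ρ x + C) :=
    gridMean_mem hn hcont hx (convex_Icc _ _) isClosed_Icc fun y hy =>
      Set.mem_Icc_iff_abs_le.1 (abs_sub_le_of_mem_cellOf hβ₀ hR hhold hn hx hy)
  have hlow : cmin ≤ gridMean n ρ x :=
    gridMean_mem hn hcont hx (convex_Ici _) isClosed_Ici
      fun y hy => hlb y (hsub hy)
  calc (√(gridMean n ρ x) - √(ρ x)) ^ 2 ≤ (gridMean n ρ x - ρ x) ^ 2 / cmin :=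
        Real.sq_sqrt_sub_sqrt_le hcmin hlow (hlb x hxU)
    _ ≤ C ^ 2 / cmin :=
        div_le_div_of_nonneg_right (sq_le_sq' (by linarith [hwindow.1]) (by linarith [hwindow.2]))
          hcmin.le
    _ = R ^ 2 * ((√2 / n) ^ β) ^ 2 / cmin := by ring
    _ ≤ R ^ 2 * (2 * (n : ℝ) ^ (-(2 * β))) / cmin := by
        gcongr
        exact sq_rpow_sqrt_two_div_le hβ₁ hn'
    _ = 2 * R ^ 2 * (n : ℝ) ^ (-(2 * β)) / cmin := by ring

lemma setIntegral_le_mul_measureReal {α : Type*} [MeasurableSpace α] {μ : Measure α}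
    {s : Set α} {f : α → ℝ} {C : ℝ} (hs : μ s ≠ ∞) (hf₀ : ∀ x ∈ s, 0 ≤ f x)
    (hfC : ∀ x ∈ s, f x ≤ C) : ∫ x in s, f x ∂μ ≤ C * μ.real s := by
  refine (Real.le_norm_self _).trans
    (norm_setIntegral_le_of_norm_le_const hs.lt_top fun x hx => ?_)
  rw [Real.norm_eq_abs, abs_of_nonneg (hf₀ x hx)]
  exact hfC x hx

lemma Ico_prod_Ico_ae_eq_unitSq :
    (Set.Ico (0 : ℝ) 1 ×ˢ Set.Ico (0 : ℝ) 1 : Set (ℝ × ℝ)) =ᵐ[volume] unitSq :=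
  Measure.set_prod_ae_eq Ico_ae_eq_Icc Ico_ae_eq_Icc

lemma volume_Ico_prod_Ico :
    volume (Set.Ico (0 : ℝ) 1 ×ˢ Set.Ico (0 : ℝ) 1 : Set (ℝ × ℝ)) = 1 := by
  rw [Measure.volume_eq_prod, Measure.prod_prod, Real.volume_Ico]
  norm_num

theorem piecewise_constant_bias_general (β R cmin : ℝ) (hβ₀ : 0 < β) (hβ₁ : β ≤ 1)
    (hR : 0 < R) (hcmin : 0 < cmin) (ρ : ℝ × ℝ → ℝ)
    (hcont : ContinuousOn ρ unitSq)
    (hlb : ∀ z ∈ unitSq, cmin ≤ ρ z)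
    (hhold : ∀ z ∈ unitSq, ∀ w ∈ unitSq,
      |ρ z - ρ w| ≤ R * Real.sqrt ((z.1 - w.1) ^ 2 + (z.2 - w.2) ^ 2) ^ β)
    (n : ℕ) (hn : 1 ≤ n) :
    (∫ x in unitSq,
        (Real.sqrt ((n : ℝ) ^ 2 * ∫ y in cellOf n x, ρ y) - Real.sqrt (ρ x)) ^ 2)
      ≤ 2 * R ^ 2 * (n : ℝ) ^ (-(2 * β)) / cmin := by
  rw [← setIntegral_congr_set Ico_prod_Ico_ae_eq_unitSq]
  calc _ ≤ 2 * R ^ 2 * (n : ℝ) ^ (-(2 * β)) / cmin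
          * volume.real (Set.Ico (0 : ℝ) 1 ×ˢ Set.Ico (0 : ℝ) 1) :=
        setIntegral_le_mul_measureReal (volume_Ico_prod_Ico ▸ ENNReal.one_ne_top)
          (fun _ _ => sq_nonneg _) fun _ hx =>
            sq_sqrt_gridMean_sub_sqrt_le hβ₀.le hβ₁ hR.le hcmin hcont hlb hhold hn hx
    _ = 2 * R ^ 2 * (n : ℝ) ^ (-(2 * β)) / cmin := by
        rw [measureReal_def, volume_Ico_prod_Ico, ENNReal.toReal_one, mul_one]

theorem piecewise_constant_bias (β R cmin : ℝ) (hβ₀ : 0 < β) (hβ₁ : β ≤ 1)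
    (hR : 0 < R) (hcmin : 0 < cmin) (ρ : ℝ × ℝ → ℝ)
    (hcont : ContinuousOn ρ unitSq)
    (hint : (∫ z in unitSq, ρ z) = 1)
    (hlb : ∀ z ∈ unitSq, cmin ≤ ρ z)
    (hhold : ∀ z ∈ unitSq, ∀ w ∈ unitSq,
      |ρ z - ρ w| ≤ R * Real.sqrt ((z.1 - w.1) ^ 2 + (z.2 - w.2) ^ 2) ^ β)
    (n : ℕ) (hn : 1 ≤ n) :
    (∫ x in unitSq,
        (Real.sqrt ((n : ℝ) ^ 2 * ∫ y in cellOf n x, ρ y) - Real.sqrt (ρ x)) ^ 2)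
      ≤ 2 * R ^ 2 * (n : ℝ) ^ (-(2 * β)) / cmin :=
  piecewise_constant_bias_general β R cmin hβ₀ hβ₁ hR hcmin ρ hcont hlb hhold n hn
end
end
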